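/- arXiv:1909.06633 — 8 statements merged into one kernel-verified Lean document; each statement's English description precedes it below -/
import Mathlib

section
/- Suppose ν ≤ c. Then for every admissible control a : [0,U] → [0,β], the silent-opponent payoff satisfies J(a) ≤ ((c − ν)(1 − e^{−βU}) − ν x₀) e^{−x₀}, and the constant control a ≡ β attains this bound, i.e. J(β·𝟙) = ((c − ν)(1 − e^{−βU}) − ν x₀) e^{−x₀}. (Paper's Theorem 1, case ν ≤ c: against a silent opponent the best response is to accelerate at the maximal rate throughout.) -/
open MeasureTheory Real Set
open scoped ENNReal NNReal

/-- State trajectory `A(t) = x₀ + ∫₀ᵗ a(s) ds` of a control `a`. -/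
noncomputable def stateTraj (x₀ : ℝ) (a : ℝ → ℝ) (t : ℝ) : ℝ :=
  x₀ + ∫ s in (0:ℝ)..t, a s

/-- Silent-opponent payoff
`J(a) = ∫₀ᵁ (c − ν A(s)) e^{−A(s)} a(s) ds − ν A(U) e^{−A(U)}`. -/
noncomputable def silentPayoff (U ν c x₀ : ℝ) (a : ℝ → ℝ) : ℝ :=
  (∫ s in (0:ℝ)..U, (c - ν * stateTraj x₀ a s) * Real.exp (-(stateTraj x₀ a s)) * a s)
    - ν * stateTraj x₀ a U * Real.exp (-(stateTraj x₀ a U))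

section Aux

variable {β x₀ : ℝ} {a : ℝ → ℝ}

lemma aux_intInt (ha : Measurable a) (h0 : ∀ s, 0 ≤ a s) (hb : ∀ s, a s ≤ β)
    (p q : ℝ) : IntervalIntegrable a volume p q := by
  constructor <;>
  · refine (integrable_const β).mono' ha.aestronglyMeasurable (ae_of_all _ fun s => ?_)
    rw [Real.norm_eq_abs, abs_of_nonneg (h0 s)]; exact hb s

lemma aux_mono (ha : Measurable a) (h0 : ∀ s, 0 ≤ a s) (hb : ∀ s, a s ≤ β) :
    Monotone (stateTraj x₀ a) := by
  intro s t hst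
  unfold stateTraj
  have hadd := intervalIntegral.integral_add_adjacent_intervals
    (aux_intInt ha h0 hb 0 s) (aux_intInt ha h0 hb s t)
  have hpos : 0 ≤ ∫ u in s..t, a u :=
    intervalIntegral.integral_nonneg hst (fun u _ => h0 u)
  linarith [hadd]

lemma aux_cont (ha : Measurable a) (h0 : ∀ s, 0 ≤ a s) (hb : ∀ s, a s ≤ β) :
    Continuous (stateTraj x₀ a) :=
  continuous_const.add (intervalIntegral.continuous_primitive (aux_intInt ha h0 hb) 0)

lemma aux_zero : stateTraj x₀ a 0 = x₀ := by simp [stateTraj]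

lemma aux_le (ha : Measurable a) (h0 : ∀ s, 0 ≤ a s) (hb : ∀ s, a s ≤ β)
    {U : ℝ} (hU : 0 ≤ U) : stateTraj x₀ a U ≤ x₀ + β * U := by
  unfold stateTraj
  have : (∫ s in (0:ℝ)..U, a s) ≤ ∫ _ in (0:ℝ)..U, β :=
    intervalIntegral.integral_mono_on hU (aux_intInt ha h0 hb 0 U)
      intervalIntegrable_const (fun s _ => hb s)
  simp only [intervalIntegral.integral_const, smul_eq_mul, sub_zero] at this
  linarith

lemma key_map (ha : Measurable a) (h0 : ∀ s, 0 ≤ a s) (hb : ∀ s, a s ≤ β)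
    (hx₀ : 0 ≤ x₀) {U : ℝ} (hU : 0 ≤ U) :
    ((volume.restrict (Icc (0:ℝ) U)).withDensity
        (fun s => ((a s).toNNReal : ℝ≥0∞))).map (stateTraj x₀ a)
      = volume.restrict (Icc x₀ (stateTraj x₀ a U)) := by
  set A := stateTraj x₀ a with hA
  have hAc : Continuous A := aux_cont ha h0 hb
  have hAm : Monotone A := aux_mono ha h0 hb
  have hA0 : A 0 = x₀ := aux_zero
  set μ₀ := volume.restrict (Icc (0:ℝ) U) with hμ₀
  set μ := μ₀.withDensity (fun s => ((a s).toNNReal : ℝ≥0∞)) with hμ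
  have hdens : ∀ s, ((a s).toNNReal : ℝ≥0∞) = ENNReal.ofReal (a s) := fun s => rfl
  haveI : IsFiniteMeasure μ := by
    refine isFiniteMeasure_withDensity ?_
    have h1 : (∫⁻ s, ((a s).toNNReal : ℝ≥0∞) ∂μ₀) ≤ ∫⁻ _, ENNReal.ofReal β ∂μ₀ := by
      refine lintegral_mono fun s => ?_
      rw [hdens]; exact ENNReal.ofReal_le_ofReal (hb s)
    refine ne_of_lt (lt_of_le_of_lt h1 ?_)
    rw [lintegral_const, hμ₀, Measure.restrict_apply_univ, Real.volume_Icc]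
    exact ENNReal.mul_lt_top ENNReal.ofReal_lt_top ENNReal.ofReal_lt_top
  haveI : IsFiniteMeasure (μ.map A) := μ.isFiniteMeasure_map A
  refine MeasureTheory.Measure.ext_of_Iic (μ.map A) _ (fun r => ?_)
  have hpre : MeasurableSet (A ⁻¹' Iic r) := (hAc.measurable) measurableSet_Iic
  rw [Measure.map_apply hAc.measurable measurableSet_Iic, hμ, withDensity_apply _ hpre,
    hμ₀, Measure.restrict_restrict hpre, Measure.restrict_apply measurableSet_Iic]
  rcases lt_or_ge r x₀ with hr | hr
  · have hS : A ⁻¹' Iic r ∩ Icc (0:ℝ) U = ∅ := by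
      ext s; simp only [mem_inter_iff, mem_preimage, mem_Iic, mem_Icc, mem_empty_iff_false,
        iff_false, not_and, and_imp]
      intro hAs hs0 _
      have : x₀ ≤ A s := hA0 ▸ hAm hs0
      linarith
    have hR : Iic r ∩ Icc x₀ (A U) = ∅ := by
      ext u; simp only [mem_inter_iff, mem_Iic, mem_Icc, mem_empty_iff_false, iff_false,
        not_and, and_imp]
      intro h1 h2; intro; linarith
    rw [hS, hR]; simp
  · set S₀ := Icc (0:ℝ) U ∩ A ⁻¹' Iic r with hS₀def
    have hScomp : IsCompact S₀ := isCompact_Icc.inter_right (isClosed_Iic.preimage hAc)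
    have hSne : S₀.Nonempty := ⟨0, ⟨le_refl _, hU⟩, by simp [hA0, hr]⟩
    set tc := sSup S₀ with htc
    have htcS : tc ∈ S₀ := hScomp.sSup_mem hSne
    have hbdd : BddAbove S₀ := hScomp.bddAbove
    have hSeq : A ⁻¹' Iic r ∩ Icc (0:ℝ) U = Icc 0 tc := by
      ext s
      simp only [mem_inter_iff, mem_preimage, mem_Iic, mem_Icc]
      constructor
      · rintro ⟨h1, h2, h3⟩
        exact ⟨h2, le_csSup hbdd ⟨⟨h2, h3⟩, h1⟩⟩
      · rintro ⟨h1, h2⟩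
        exact ⟨le_trans (hAm h2) htcS.2, h1, le_trans h2 htcS.1.2⟩
    have hInt : IntegrableOn a (Icc 0 tc) := by
      refine (integrable_const β).mono' ha.aestronglyMeasurable (ae_of_all _ fun s => ?_)
      rw [Real.norm_eq_abs, abs_of_nonneg (h0 s)]; exact hb s
    have hIval : (∫ s in Icc (0:ℝ) tc, a s) = A tc - x₀ := by
      rw [MeasureTheory.integral_Icc_eq_integral_Ioc,
        ← intervalIntegral.integral_of_le htcS.1.1]
      simp [hA, stateTraj]
    have hLHS : (∫⁻ s in A ⁻¹' Iic r ∩ Icc (0:ℝ) U, ((a s).toNNReal : ℝ≥0∞) ∂volume)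
        = ENNReal.ofReal (A tc - x₀) := by
      simp only [hdens]
      rw [hSeq, ← hIval, ← ofReal_integral_eq_lintegral_ofReal hInt (ae_of_all _ h0)]
    rw [hLHS]
    rcases le_or_gt (A U) r with hrU | hrU
    · have htcU : tc = U := le_antisymm htcS.1.2 (le_csSup hbdd ⟨⟨hU, le_refl U⟩, hrU⟩)
      have hset : Iic r ∩ Icc x₀ (A U) = Icc x₀ (A U) :=
        Set.inter_eq_right.mpr (fun u (hu : u ∈ Icc x₀ (A U)) => le_trans hu.2 hrU)
      rw [htcU, hset, Real.volume_Icc]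
    · have hAtc : A tc = r := by
        refine le_antisymm htcS.2 ?_
        by_contra hlt
        push_neg at hlt
        have htcU : tc < U := by
          rcases lt_or_eq_of_le htcS.1.2 with h | h
          · exact h
          · exact absurd (h ▸ htcS.2 : A U ≤ r) (not_le.mpr hrU)
        have hev0 : ∀ᶠ s in nhds tc, A s < r := (hAc.tendsto tc).eventually_lt_const hlt
        have hev : ∀ᶠ s in nhdsWithin tc (Ioi tc), A s < r :=
          eventually_nhdsWithin_of_eventually_nhds hev0
        have hev2 : ∀ᶠ s in nhdsWithin tc (Ioi tc), s ∈ Ioc tc U :=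
          Ioc_mem_nhdsGT_of_mem ⟨le_refl _, htcU⟩
        obtain ⟨s, hs1, hs2⟩ := (hev.and hev2).exists
        have : s ∈ S₀ := ⟨⟨le_trans htcS.1.1 hs2.1.le, hs2.2⟩, hs1.le⟩
        exact absurd (le_csSup hbdd this) (not_le.mpr hs2.1)
      rw [hAtc]
      have : Iic r ∩ Icc x₀ (A U) = Icc x₀ r := by
        ext u
        simp only [mem_inter_iff, mem_Iic, mem_Icc]
        constructor
        · rintro ⟨h1, h2, h3⟩; exact ⟨h2, h1⟩
        · rintro ⟨h1, h2⟩; exact ⟨h2, h1, le_trans h2 hrU.le⟩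
      rw [this, Real.volume_Icc]

lemma key_subst (ha : Measurable a) (h0 : ∀ s, 0 ≤ a s) (hb : ∀ s, a s ≤ β)
    (hx₀ : 0 ≤ x₀) {U : ℝ} (hU : 0 ≤ U) (g : ℝ → ℝ) (hg : Continuous g) :
    (∫ s in (0:ℝ)..U, g (stateTraj x₀ a s) * a s)
      = ∫ u in x₀..(stateTraj x₀ a U), g u := by
  set A := stateTraj x₀ a with hA
  have hAm : Monotone A := aux_mono ha h0 hb
  have hx₀U : x₀ ≤ A U := by
    have h := hAm hU
    simp only [hA] at h
    rwa [aux_zero] at h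
  set μ₀ := volume.restrict (Icc (0:ℝ) U) with hμ₀
  set μ := μ₀.withDensity (fun s => ((a s).toNNReal : ℝ≥0∞)) with hμ
  have step1 : (∫ s in (0:ℝ)..U, g (A s) * a s) = ∫ s, g (A s) ∂μ := by
    rw [hμ, integral_withDensity_eq_integral_smul
      (Measurable.real_toNNReal ha) (fun s => g (A s))]
    rw [intervalIntegral.integral_of_le hU, hμ₀, ← MeasureTheory.integral_Icc_eq_integral_Ioc]
    refine integral_congr_ae (ae_of_all _ fun s => ?_)
    simp only [NNReal.smul_def, smul_eq_mul, Real.coe_toNNReal _ (h0 s)]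
    ring
  have step2 : (∫ s, g (A s) ∂μ) = ∫ u, g u ∂(μ.map A) :=
    (integral_map (aux_cont ha h0 hb).measurable.aemeasurable
      hg.aestronglyMeasurable).symm
  rw [step1, step2, key_map ha h0 hb hx₀ hU, MeasureTheory.integral_Icc_eq_integral_Ioc,
    ← intervalIntegral.integral_of_le hx₀U]

lemma payoff_formula {U ν c : ℝ} (ha : Measurable a) (h0 : ∀ s, 0 ≤ a s) (hb : ∀ s, a s ≤ β)
    (hx₀ : 0 ≤ x₀) (hU : 0 ≤ U) :
    silentPayoff U ν c x₀ a
      = (ν - c) * Real.exp (-(stateTraj x₀ a U)) - (ν * x₀ + ν - c) * Real.exp (-x₀) := by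
  have hg : Continuous (fun u : ℝ => (c - ν * u) * Real.exp (-u)) := by
    continuity
  have hkey := key_subst ha h0 hb hx₀ hU (fun u => (c - ν * u) * Real.exp (-u)) hg
  have hG : ∀ u : ℝ, HasDerivAt (fun u => (ν * u + ν - c) * Real.exp (-u))
      ((c - ν * u) * Real.exp (-u)) u := by
    intro u
    have h1 : HasDerivAt (fun u : ℝ => ν * u + ν - c) ν u := by
      simpa [add_sub_assoc] using ((hasDerivAt_id u).const_mul ν).add_const (ν - c)
    have h2 : HasDerivAt (fun u : ℝ => Real.exp (-u)) (-Real.exp (-u)) u := by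
      simpa using ((hasDerivAt_neg u).exp)
    have : HasDerivAt (fun u => (ν * u + ν - c) * Real.exp (-u))
        (ν * Real.exp (-u) + (ν * u + ν - c) * -Real.exp (-u)) u := h1.mul h2
    convert this using 1
    ring
  have hFTC : (∫ u in x₀..(stateTraj x₀ a U), (c - ν * u) * Real.exp (-u))
      = (ν * stateTraj x₀ a U + ν - c) * Real.exp (-(stateTraj x₀ a U))
        - (ν * x₀ + ν - c) * Real.exp (-x₀) := by
    exact intervalIntegral.integral_eq_sub_of_hasDerivAt (fun u _ => hG u)
      (hg.intervalIntegrable _ _)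
  unfold silentPayoff
  rw [hkey, hFTC]
  ring

end Aux

/-- Paper's Theorem 1, case ν ≤ c: against a silent opponent, every admissible
control's payoff is at most `((c−ν)(1−e^{−βU}) − ν x₀) e^{−x₀}`, and the
constant maximal-rate control `a ≡ β` attains this bound. -/
theorem silent_opponent_best_response_full_rate
    (U β c ν x₀ : ℝ) (hU : 0 < U) (hβ : 0 < β) (hc : 0 < c) (hν : 0 < ν)
    (hx₀ : 0 ≤ x₀) (hνc : ν ≤ c) :
    (∀ a : ℝ → ℝ, Measurable a → (∀ t ∈ Icc (0:ℝ) U, a t ∈ Icc (0:ℝ) β) →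
        silentPayoff U ν c x₀ a ≤
          ((c - ν) * (1 - Real.exp (-β * U)) - ν * x₀) * Real.exp (-x₀)) ∧
      silentPayoff U ν c x₀ (fun _ => β) =
        ((c - ν) * (1 - Real.exp (-β * U)) - ν * x₀) * Real.exp (-x₀) := by
  have hval : ((c - ν) * (1 - Real.exp (-β * U)) - ν * x₀) * Real.exp (-x₀)
      = (ν - c) * Real.exp (-(x₀ + β * U)) - (ν * x₀ + ν - c) * Real.exp (-x₀) := by
    have he : Real.exp (-(x₀ + β * U)) = Real.exp (-x₀) * Real.exp (-β * U) := by
      rw [← Real.exp_add]; congr 1; ring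
    rw [he]; ring
  constructor
  · intro a ha hbnd
    set a' : ℝ → ℝ := fun s => max 0 (min (a s) β) with ha'def
    have ha' : Measurable a' := measurable_const.max (ha.min measurable_const)
    have h0' : ∀ s, 0 ≤ a' s := fun s => le_max_left _ _
    have hb' : ∀ s, a' s ≤ β := fun s => max_le hβ.le (min_le_right _ _)
    have heq : ∀ t ∈ Icc (0:ℝ) U, a t = a' t := by
      intro t ht
      have h1 := (hbnd t ht).1
      have h2 := (hbnd t ht).2
      simp [ha'def, min_eq_left h2, max_eq_right h1]
    have hTraj : ∀ t ∈ Icc (0:ℝ) U, stateTraj x₀ a t = stateTraj x₀ a' t := by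
      intro t ht
      unfold stateTraj
      congr 1
      refine intervalIntegral.integral_congr (fun s hs => ?_)
      rw [uIcc_of_le ht.1] at hs
      exact heq s ⟨hs.1, le_trans hs.2 ht.2⟩
    have hPay : silentPayoff U ν c x₀ a = silentPayoff U ν c x₀ a' := by
      unfold silentPayoff
      rw [hTraj U ⟨hU.le, le_refl U⟩]
      congr 1
      refine intervalIntegral.integral_congr (fun s hs => ?_)
      rw [uIcc_of_le hU.le] at hs
      rw [hTraj s hs, heq s hs]
    rw [hPay, payoff_formula ha' h0' hb' hx₀ hU.le, hval]
    have hle : stateTraj x₀ a' U ≤ x₀ + β * U := aux_le ha' h0' hb' hU.le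
    have hexp : Real.exp (-(x₀ + β * U)) ≤ Real.exp (-(stateTraj x₀ a' U)) :=
      Real.exp_le_exp.mpr (by linarith)
    have : (ν - c) * Real.exp (-(stateTraj x₀ a' U)) ≤ (ν - c) * Real.exp (-(x₀ + β * U)) :=
      mul_le_mul_of_nonpos_left hexp (by linarith)
    linarith
  · have hT : stateTraj x₀ (fun _ => β) U = x₀ + β * U := by
      simp [stateTraj, mul_comm]
    rw [payoff_formula measurable_const (fun _ => hβ.le) (fun _ => le_refl β) hx₀ hU.le,
      hT, hval]
end

section
/- Let κ = e^{−βU}(ν − c) and define W(t,x) = (−νx − ν + c)e^{−x} + κ e^{−x+βt} for (t,x) ∈ [0,U] × ℝ. Then: (i) ∂W/∂x(t,x) = (νx − c)e^{−x} − κ e^{−x+βt}, so that for every real a one has (c − νx)e^{−x}·a + a·∂W/∂x(t,x) = −κ a e^{−x+βt}; (ii) if ν ≤ c (so κ ≤ 0), then ∂W/∂t(t,x) + max_{a ∈ [0,β]} [ (c − νx)e^{−x}·a + a·∂W/∂x(t,x) ] = 0 for all (t,x) ∈ [0,U] × ℝ, with the maximum attained at a = β; (iii) the boundary condition W(U,x)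 = −ν x e^{−x} holds for all x. (HJB verification claim from the proof of the paper's Theorem 1, case ν ≤ c.) -/
open Real Set

/-- Candidate value function `W(t,x) = (−νx − ν + c)e^{−x} + κ e^{−x+βt}`
with `κ = e^{−βU}(ν − c)`. -/
noncomputable def Wcand (U β c ν t x : ℝ) : ℝ :=
  (-(ν * x) - ν + c) * Real.exp (-x)
    + Real.exp (-(β * U)) * (ν - c) * Real.exp (-x + β * t)

/-- Its claimed partial derivative in `x`:
`∂W/∂x(t,x) = (νx − c)e^{−x} − κ e^{−x+βt}`. -/
noncomputable def WcandX (U β c ν t x : ℝ) : ℝ :=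
  (ν * x - c) * Real.exp (-x)
    - Real.exp (-(β * U)) * (ν - c) * Real.exp (-x + β * t)

/-! The running reward and `a · ∂W/∂x` cancel up to the term `−κ a e^{−x+βt}`, which is linear
in `a` with slope `−κ e^{−x+βt} ≥ 0` when `ν ≤ c`; hence the maximum over `[0, β]` sits at `a = β`,
where it exactly cancels `∂W/∂t = κ β e^{−x+βt}`. The boundary condition is `e^{−βU} e^{βU} = 1`. -/

section

variable (U β c ν : ℝ)

theorem hasDerivAt_Wcand_x (t x : ℝ) :
    HasDerivAt (fun y => Wcand U β c ν t y) (WcandX U β c ν t x) x := by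
  have hlin : HasDerivAt (fun y : ℝ => -(ν * y) - ν + c) (-ν) x := by
    simpa using (((hasDerivAt_id x).const_mul ν).neg.sub_const ν).add_const c
  have hshift : HasDerivAt (fun y : ℝ => -y + β * t) (-1) x :=
    (hasDerivAt_neg x).add_const _
  refine ((hlin.mul (hasDerivAt_neg x).exp).add
    (hshift.exp.const_mul (exp (-(β * U)) * (ν - c)))).congr_deriv ?_
  simp only [WcandX]
  ring

theorem hasDerivAt_Wcand_t (t x : ℝ) :
    HasDerivAt (fun s => Wcand U β c ν s x)
      (exp (-(β * U)) * (ν - c) * β * exp (-x + β * t)) t := by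
  have hshift : HasDerivAt (fun s : ℝ => -x + β * s) β t := by
    simpa using ((hasDerivAt_id t).const_mul β).const_add (-x)
  refine ((hshift.exp.const_mul (exp (-(β * U)) * (ν - c))).const_add
    ((-(ν * x) - ν + c) * exp (-x))).congr_deriv ?_
  ring

theorem reward_add_mul_WcandX (t x a : ℝ) :
    (c - ν * x) * exp (-x) * a + a * WcandX U β c ν t x
      = -(exp (-(β * U)) * (ν - c)) * a * exp (-x + β * t) := by
  simp only [WcandX]
  ring

theorem monotone_reward_add_mul_WcandX (hνc : ν ≤ c) (t x : ℝ) :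
    Monotone fun a => (c - ν * x) * exp (-x) * a + a * WcandX U β c ν t x := by
  intro a b hab
  simp only [reward_add_mul_WcandX]
  have hκ : 0 ≤ -(exp (-(β * U)) * (ν - c)) :=
    neg_nonneg.2 (mul_nonpos_of_nonneg_of_nonpos (exp_pos _).le (sub_nonpos.2 hνc))
  gcongr

theorem Wcand_terminal (x : ℝ) : Wcand U β c ν U x = -(ν * x) * exp (-x) := by
  have hcancel : exp (-(β * U)) * exp (β * U) = 1 := by
    rw [← exp_add, neg_add_cancel, exp_zero]
  simp only [Wcand]
  rw [show -x + β * U = β * U + -x by ring, exp_add]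
  linear_combination (ν - c) * exp (-x) * hcancel

end

theorem hjb_verification_nu_le_c_general
    (U β c ν : ℝ) :
    (∀ t ∈ Icc (0:ℝ) U, ∀ x : ℝ,
        HasDerivAt (fun y => Wcand U β c ν t y) (WcandX U β c ν t x) x ∧
        ∀ a : ℝ,
          (c - ν * x) * Real.exp (-x) * a + a * WcandX U β c ν t x
            = -(Real.exp (-(β * U)) * (ν - c)) * a * Real.exp (-x + β * t)) ∧
    (ν ≤ c →
      ∀ t ∈ Icc (0:ℝ) U, ∀ x : ℝ,
        -- `∂W/∂t(t,x) = κ β e^{−x+βt}`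
        HasDerivAt (fun s => Wcand U β c ν s x)
          (Real.exp (-(β * U)) * (ν - c) * β * Real.exp (-x + β * t)) t ∧
        -- the HJB equation holds with maximizing action `a = β`
        Real.exp (-(β * U)) * (ν - c) * β * Real.exp (-x + β * t)
            + ((c - ν * x) * Real.exp (-x) * β + β * WcandX U β c ν t x) = 0 ∧
        -- the maximum over `a ∈ [0,β]` is attained at `a = β`
        ∀ a ∈ Icc (0:ℝ) β,
          (c - ν * x) * Real.exp (-x) * a + a * WcandX U β c ν t x
            ≤ (c - ν * x) * Real.exp (-x) * β + β * WcandX U β c ν t x) ∧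
    (∀ x : ℝ, Wcand U β c ν U x = -(ν * x) * Real.exp (-x)) := by
  refine ⟨fun t _ x => ⟨hasDerivAt_Wcand_x U β c ν t x, reward_add_mul_WcandX U β c ν t x⟩,
    fun hνc t _ x => ⟨hasDerivAt_Wcand_t U β c ν t x, ?_, fun a ha => ?_⟩,
    Wcand_terminal U β c ν⟩
  · rw [reward_add_mul_WcandX]
    ring
  · exact monotone_reward_add_mul_WcandX U β c ν hνc t x ha.2

/-- HJB verification claim from the proof of the paper's Theorem 1, case ν ≤ c.
(i) `∂W/∂x` is as claimed and `L(t,x,a) + a ∂W/∂x = −κ a e^{−x+βt}`;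
(ii) if ν ≤ c then `∂W/∂t + max_{a∈[0,β]} {L + a ∂W/∂x} = 0`, the max attained
at `a = β`;  (iii) boundary condition `W(U,x) = −νx e^{−x}`. -/
theorem hjb_verification_nu_le_c
    (U β c ν : ℝ) (hU : 0 < U) (hβ : 0 < β) (hc : 0 < c) (hν : 0 < ν) :
    (∀ t ∈ Icc (0:ℝ) U, ∀ x : ℝ,
        HasDerivAt (fun y => Wcand U β c ν t y) (WcandX U β c ν t x) x ∧
        ∀ a : ℝ,
          (c - ν * x) * Real.exp (-x) * a + a * WcandX U β c ν t x
            = -(Real.exp (-(β * U)) * (ν - c)) * a * Real.exp (-x + β * t)) ∧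
    (ν ≤ c →
      ∀ t ∈ Icc (0:ℝ) U, ∀ x : ℝ,
        -- `∂W/∂t(t,x) = κ β e^{−x+βt}`
        HasDerivAt (fun s => Wcand U β c ν s x)
          (Real.exp (-(β * U)) * (ν - c) * β * Real.exp (-x + β * t)) t ∧
        -- the HJB equation holds with maximizing action `a = β`
        Real.exp (-(β * U)) * (ν - c) * β * Real.exp (-x + β * t)
            + ((c - ν * x) * Real.exp (-x) * β + β * WcandX U β c ν t x) = 0 ∧
        -- the maximum over `a ∈ [0,β]` is attained at `a = β`
        ∀ a ∈ Icc (0:ℝ) β,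
          (c - ν * x) * Real.exp (-x) * a + a * WcandX U β c ν t x
            ≤ (c - ν * x) * Real.exp (-x) * β + β * WcandX U β c ν t x) ∧
    (∀ x : ℝ, Wcand U β c ν U x = -(ν * x) * Real.exp (-x)) :=
  hjb_verification_nu_le_c_general U β c ν
end

section
/- Assume 0 < ν < 1 and let agent j play the time-threshold control b = Γ_{βʲ}(ψ) for some ψ ∈ [0,T], so that e^{−B(s)} = e^{−βʲ(s∧ψ)}. If ν < e^{−βʲψ}, then the full-effort control a* = Γ_{βⁱ}(T) (i.e. a*(t) = βⁱ for all t ∈ [0,T]) is a best response of agent i: Jⁱ(a, Γ_{βʲ}(ψ)) ≤ Jⁱ(Γ_{βⁱ}(T), Γ_{βʲ}(ψ)) for every admissible control a of agent i. (Paper's Theorem 2, first case.) -/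
open MeasureTheory Real Set

/-- Cumulative rate `A(t) = ∫₀ᵗ a(s) ds` of a control `a`. -/
noncomputable def cum (a : ℝ → ℝ) (t : ℝ) : ℝ := ∫ s in (0:ℝ)..t, a s

/-- One-lock payoff of agent `i`:
`Jⁱ(a,b) = ∫₀ᵀ (e^{−B(s)} − ν A(s)) e^{−A(s)} a(s) ds − ν A(T) e^{−A(T)}`. -/
noncomputable def oneLockPayoff (T ν : ℝ) (a b : ℝ → ℝ) : ℝ :=
  (∫ s in (0:ℝ)..T,
      (Real.exp (-(cum b s)) - ν * cum a s) * Real.exp (-(cum a s)) * a s)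
    - ν * cum a T * Real.exp (-(cum a T))

/-- Time-threshold control `Γ_β(ψ)(t) = β · 𝟙_{[0,ψ]}(t)`. -/
noncomputable def threshold (β ψ : ℝ) : ℝ → ℝ :=
  fun t => if t ∈ Set.Icc (0:ℝ) ψ then β else 0

/-!
Write `A`, `B` for the cumulative rates of `a`, `b`. These are absolutely continuous, so the chain
rule gives `∫₀ᵀ e^{-(A+B)} (a + b) = 1 - e^{-(A(T)+B(T))}` and
`∫₀ᵀ A e^{-A} a = 1 - (A(T) + 1) e^{-A(T)}`, whence
`Jⁱ(a,b) = 1 - ν + (ν - e^{-B(T)}) e^{-A(T)} - ∫₀ᵀ e^{-(A+B)} b`.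
If `b ≥ 0` and `ν ≤ e^{-B(T)}`, both terms are nondecreasing in `A`, and full effort maximises `A`
pointwise; against `Γ_{βʲ}(ψ)` we have `B(T) = βʲψ`.
-/

open Filter
open scoped NNReal

theorem LipschitzOnWith.comp_absolutelyContinuousOnInterval {X Y : Type*} [PseudoMetricSpace X]
    [PseudoMetricSpace Y] {G : X → Y} {f : ℝ → X} {s : Set X} {K : ℝ≥0} {a b : ℝ}
    (hG : LipschitzOnWith K G s) (hf : AbsolutelyContinuousOnInterval f a b)
    (hfs : MapsTo f (uIcc a b) s) : AbsolutelyContinuousOnInterval (G ∘ f) a b := by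
  have hlim := Tendsto.const_mul (K : ℝ) hf
  rw [mul_zero] at hlim
  refine squeeze_zero' (Eventually.of_forall fun E ↦ Finset.sum_nonneg fun _ _ ↦ dist_nonneg)
    ?_ hlim
  filter_upwards [mem_inf_of_right (mem_principal_self _)] with E hE
  rw [Finset.mul_sum]
  exact Finset.sum_le_sum fun i hi ↦
    hG.dist_le_mul _ (hfs (hE.1 i hi).1) _ (hfs (hE.1 i hi).2)

theorem intervalIntegral.integral_comp_primitive_mul_eq_sub {f G G' : ℝ → ℝ} {a b : ℝ}
    (hf : IntervalIntegrable f volume a b) (hG : ∀ x, HasDerivAt G (G' x) x)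
    (hG' : Continuous G') :
    ∫ x in a..b, G' (∫ s in a..x, f s) * f x = G (∫ s in a..b, f s) - G 0 := by
  set F := fun x ↦ ∫ s in a..x, f s
  have hF : AbsolutelyContinuousOnInterval F a b :=
    hf.absolutelyContinuousOnInterval_intervalIntegral left_mem_uIcc
  obtain ⟨R, hR⟩ :=
    (isCompact_uIcc.image_of_continuousOn hF.continuousOn).isBounded.subset_closedBall 0
  have hGC1 : ContDiff ℝ 1 G :=
    contDiff_one_iff_deriv.2 ⟨fun x ↦ (hG x).differentiableAt, by
      simpa [funext fun x ↦ (hG x).deriv] using hG'⟩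
  obtain ⟨K, hK⟩ := hGC1.contDiffOn.exists_lipschitzOnWith one_ne_zero (convex_closedBall 0 R)
    (isCompact_closedBall 0 R)
  have hGF := (hK.comp_absolutelyContinuousOnInterval hF
    fun x hx ↦ hR ⟨x, hx, rfl⟩).integral_deriv_eq_sub
  simp only [Function.comp_apply, F, intervalIntegral.integral_same] at hGF
  rw [← hGF]
  refine intervalIntegral.integral_congr_ae ?_
  filter_upwards [hf.ae_hasDerivAt_integral] with x hx hxab
  exact (((hG _).comp x (hx (uIoc_subset_uIcc hxab) a left_mem_uIcc)).deriv).symm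

theorem intervalIntegrable_of_norm_le {f : ℝ → ℝ} {a b M : ℝ} (hf : AEStronglyMeasurable f)
    (hM : ∀ t ∈ uIcc a b, ‖f t‖ ≤ M) : IntervalIntegrable f volume a b :=
  (Measure.integrableOn_of_bounded isCompact_uIcc.measure_lt_top.ne hf
    (ae_restrict_of_forall_mem measurableSet_uIcc hM)).intervalIntegrable

section cum
variable {f g : ℝ → ℝ} {t : ℝ}

theorem continuousOn_cum (hf : IntervalIntegrable f volume 0 t) :
    ContinuousOn (cum f) (uIcc 0 t) :=
  intervalIntegral.continuousOn_primitive_interval' hf left_mem_uIcc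

theorem cum_add (hf : IntervalIntegrable f volume 0 t) (hg : IntervalIntegrable g volume 0 t)
    {s : ℝ} (hs : s ∈ uIcc 0 t) : cum (fun x ↦ f x + g x) s = cum f s + cum g s := by
  have hsub : uIcc 0 s ⊆ uIcc 0 t := uIcc_subset_uIcc_left hs
  exact intervalIntegral.integral_add (hf.mono_set hsub) (hg.mono_set hsub)

theorem cum_le_mul_of_le {β : ℝ} (ht : 0 ≤ t) (hf : IntervalIntegrable f volume 0 t)
    (hβ : ∀ s ∈ Icc 0 t, f s ≤ β) : cum f t ≤ β * t := by
  have := intervalIntegral.integral_mono_on ht hf intervalIntegrable_const hβ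
  rwa [intervalIntegral.integral_const, smul_eq_mul, sub_zero, mul_comm] at this

theorem integral_exp_neg_cum_mul (hf : IntervalIntegrable f volume 0 t) :
    ∫ s in 0..t, exp (-cum f s) * f s = 1 - exp (-cum f t) := by
  have := intervalIntegral.integral_comp_primitive_mul_eq_sub hf (G := fun x ↦ -exp (-x))
    (G' := fun x ↦ exp (-x)) (fun x ↦ by simpa using (hasDerivAt_neg x).exp.fun_neg)
    continuous_neg.rexp
  simp only [neg_zero, exp_zero] at this
  simp only [cum]
  rw [this]
  ring

theorem integral_cum_mul_exp_neg_cum_mul (hf : IntervalIntegrable f volume 0 t) :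
    ∫ s in 0..t, cum f s * exp (-cum f s) * f s = 1 - (cum f t + 1) * exp (-cum f t) := by
  have := intervalIntegral.integral_comp_primitive_mul_eq_sub hf
    (G := fun x ↦ -((x + 1) * exp (-x))) (G' := fun x ↦ x * exp (-x))
    (fun x ↦ (((hasDerivAt_id x).add_const 1).fun_mul (hasDerivAt_neg x).exp).fun_neg.congr_deriv
      (by simp only [id_eq]; ring))
    (continuous_id.mul continuous_neg.rexp)
  simp only [neg_zero, exp_zero, zero_add, one_mul] at this
  simp only [cum]
  rw [this]
  ring

end cum

section payoff
variable {T ν : ℝ} {a a' b : ℝ → ℝ}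

theorem oneLockPayoff_eq (ha : IntervalIntegrable a volume 0 T)
    (hb : IntervalIntegrable b volume 0 T) :
    oneLockPayoff T ν a b = 1 - ν + (ν - exp (-cum b T)) * exp (-cum a T)
      - ∫ s in 0..T, exp (-(cum a s + cum b s)) * b s := by
  have hA := continuousOn_cum ha
  have hAE : ContinuousOn (fun s ↦ cum a s * exp (-cum a s)) (uIcc 0 T) := hA.mul hA.neg.rexp
  have hE : ContinuousOn (fun s ↦ exp (-(cum a s + cum b s))) (uIcc 0 T) :=
    (hA.add (continuousOn_cum hb)).neg.rexp
  have hsum : ∫ s in 0..T, exp (-(cum a s + cum b s)) * (a s + b s)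
      = 1 - exp (-(cum a T + cum b T)) := by
    rw [← cum_add ha hb right_mem_uIcc, ← integral_exp_neg_cum_mul (ha.add hb)]
    refine intervalIntegral.integral_congr fun s hs ↦ ?_
    rw [cum_add ha hb hs]
  have hsplit : ∫ s in 0..T, (exp (-cum b s) - ν * cum a s) * exp (-cum a s) * a s
      = (∫ s in 0..T, exp (-(cum a s + cum b s)) * (a s + b s))
        - (∫ s in 0..T, exp (-(cum a s + cum b s)) * b s)
        - ν * ∫ s in 0..T, cum a s * exp (-cum a s) * a s := by
    rw [← intervalIntegral.integral_sub ((ha.add hb).continuousOn_mul hE)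
      (hb.continuousOn_mul hE), ← intervalIntegral.integral_const_mul,
      ← intervalIntegral.integral_sub]
    · congr 1 with s
      rw [neg_add, exp_add]
      ring
    · exact ((ha.add hb).continuousOn_mul hE).sub (hb.continuousOn_mul hE)
    · exact (ha.continuousOn_mul hAE).const_mul ν
  rw [oneLockPayoff, hsplit, hsum, integral_cum_mul_exp_neg_cum_mul ha, neg_add, exp_add]
  ring

theorem oneLockPayoff_le_of_cum_le (hT : 0 ≤ T) (ha : IntervalIntegrable a volume 0 T)
    (ha' : IntervalIntegrable a' volume 0 T) (hb : IntervalIntegrable b volume 0 T)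
    (hb0 : ∀ s ∈ Icc 0 T, 0 ≤ b s) (hν : ν ≤ exp (-cum b T))
    (hcum : ∀ s ∈ Icc 0 T, cum a s ≤ cum a' s) :
    oneLockPayoff T ν a b ≤ oneLockPayoff T ν a' b := by
  rw [oneLockPayoff_eq ha hb, oneLockPayoff_eq ha' hb]
  have hterminal : (ν - exp (-cum b T)) * exp (-cum a T)
      ≤ (ν - exp (-cum b T)) * exp (-cum a' T) :=
    mul_le_mul_of_nonpos_left (exp_le_exp.2 (neg_le_neg (hcum T ⟨hT, le_rfl⟩)))
      (sub_nonpos.2 hν)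
  have hrunning : ∫ s in 0..T, exp (-(cum a' s + cum b s)) * b s
      ≤ ∫ s in 0..T, exp (-(cum a s + cum b s)) * b s := by
    have hB := continuousOn_cum hb
    refine intervalIntegral.integral_mono_on hT
      (hb.continuousOn_mul ((continuousOn_cum ha').add hB).neg.rexp)
      (hb.continuousOn_mul ((continuousOn_cum ha).add hB).neg.rexp) fun s hs ↦ ?_
    exact mul_le_mul_of_nonneg_right (exp_le_exp.2 (by linarith [hcum s hs])) (hb0 s hs)
  linarith

end payoff

section threshold
variable {β ψ : ℝ}

theorem threshold_nonneg (hβ : 0 ≤ β) (t : ℝ) : 0 ≤ threshold β ψ t := by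
  unfold threshold
  split_ifs <;> simp [hβ]

theorem intervalIntegrable_threshold (a b : ℝ) :
    IntervalIntegrable (threshold β ψ) volume a b := by
  refine intervalIntegrable_of_norm_le (M := |β|)
    (Measurable.ite measurableSet_Icc measurable_const measurable_const).aestronglyMeasurable
    fun t _ ↦ ?_
  unfold threshold
  split_ifs <;> simp

theorem cum_threshold_of_le {t : ℝ} (ht : 0 ≤ t) (htψ : t ≤ ψ) :
    cum (threshold β ψ) t = β * t := by
  rw [cum, intervalIntegral.integral_congr (g := fun _ ↦ β), intervalIntegral.integral_const,
    smul_eq_mul, sub_zero, mul_comm]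
  intro s hs
  rw [uIcc_of_le ht] at hs
  exact if_pos ⟨hs.1, hs.2.trans htψ⟩

theorem cum_threshold_of_ge {t : ℝ} (hψ : 0 ≤ ψ) (hψt : ψ ≤ t) :
    cum (threshold β ψ) t = β * ψ := by
  have hoff : ∫ s in ψ..t, threshold β ψ s = 0 := by
    rw [intervalIntegral.integral_congr_ae (g := fun _ ↦ 0), intervalIntegral.integral_zero]
    refine Eventually.of_forall fun s hs ↦ if_neg fun h ↦ ?_
    rw [uIoc_of_le hψt] at hs
    exact absurd h.2 (not_le.2 hs.1)
  rw [cum, ← intervalIntegral.integral_add_adjacent_intervals (intervalIntegrable_threshold _ _)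
    (intervalIntegrable_threshold _ _), hoff, add_zero, ← cum, cum_threshold_of_le hψ le_rfl]

end threshold

theorem best_response_full_effort_general
    (T ν βi βj ψ : ℝ) (hβj : 0 < βj) (hψ : ψ ∈ Icc (0:ℝ) T)
    (hcase : ν < Real.exp (-(βj * ψ))) :
    ∀ a : ℝ → ℝ, Measurable a → (∀ t ∈ Icc (0:ℝ) T, a t ∈ Icc (0:ℝ) βi) →
      oneLockPayoff T ν a (threshold βj ψ)
        ≤ oneLockPayoff T ν (threshold βi T) (threshold βj ψ) := by
  intro a ha hadm
  have hT : 0 ≤ T := hψ.1.trans hψ.2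
  have haI (t : ℝ) (ht : t ∈ Icc 0 T) : IntervalIntegrable a volume 0 t :=
    intervalIntegrable_of_norm_le ha.aestronglyMeasurable fun s hs ↦ by
      rw [uIcc_of_le ht.1] at hs
      have hadm_s := hadm s ⟨hs.1, hs.2.trans ht.2⟩
      rw [Real.norm_of_nonneg hadm_s.1]
      exact hadm_s.2
  refine oneLockPayoff_le_of_cum_le hT (haI T ⟨hT, le_rfl⟩) (intervalIntegrable_threshold _ _)
    (intervalIntegrable_threshold _ _) (fun s _ ↦ threshold_nonneg hβj.le s) ?_ fun t ht ↦ ?_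
  · rw [cum_threshold_of_ge hψ.1 hψ.2]
    exact hcase.le
  · rw [cum_threshold_of_le ht.1 ht.2]
    exact cum_le_mul_of_le ht.1 (haI t ht) fun s hs ↦ (hadm s ⟨hs.1, hs.2.trans ht.2⟩).2

/-- Paper's Theorem 2, first case: if agent `j` plays `Γ_{βʲ}(ψ)` and
`ν < e^{−βʲψ}`, the full-effort control `Γ_{βⁱ}(T)` is a best response
of agent `i`. -/
theorem best_response_full_effort
    (T ν βi βj ψ : ℝ) (hT : 0 < T) (hν0 : 0 < ν) (hν1 : ν < 1)
    (hβi : 0 < βi) (hβj : 0 < βj) (hψ : ψ ∈ Icc (0:ℝ) T)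
    (hcase : ν < Real.exp (-(βj * ψ))) :
    ∀ a : ℝ → ℝ, Measurable a → (∀ t ∈ Icc (0:ℝ) T, a t ∈ Icc (0:ℝ) βi) →
      oneLockPayoff T ν a (threshold βj ψ)
        ≤ oneLockPayoff T ν (threshold βi T) (threshold βj ψ) :=
  best_response_full_effort_general T ν βi βj ψ hβj hψ hcase
end

section
/- Assume 0 < ν < 1 and let agent j play the time-threshold control b = Γ_{βʲ}(ψ) for some ψ ∈ [0,T]. If ν ≥ e^{−βʲψ}, then the threshold control a* = Γ_{βⁱ}(θ) with θ = min{ −(ln ν)/βʲ , T } is a best response of agent i: Jⁱ(a, Γ_{βʲ}(ψ)) ≤ Jⁱ(Γ_{βⁱ}(θ), Γ_{βʲ}(ψ)) for every admissible control a of agent i. (Paper's Theorem 2, second case.) -/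
open MeasureTheory Real Set

/-!
Since `A = cum a` is Lipschitz, `s ↦ A s * exp (-A s)` is absolutely continuous with derivative
`(1 - A) e^{-A} a` almost everywhere, which turns the payoff into `∫₀ᵀ (e^{-B} - ν) e^{-A} a`.
Against `b = Γ_{βʲ}(ψ)` the factor `e^{-B(s)} - ν` changes sign exactly at the `θ` with
`e^{-βʲθ} = ν`: after `θ` agent `i` can only lose, and before `θ` an integration by parts gives
`∫₀^θ βʲ e^{-βʲ s} (1 - e^{-A(s)}) ds`, which is increasing in `A` and hence maximal for
`A(s) = βⁱ s`, that is, for `a = Γ_{βⁱ}(θ)`.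
-/

theorem ContDiff.absolutelyContinuousOnInterval_comp {G A : ℝ → ℝ} {K : NNReal} {x y : ℝ}
    (hG : ContDiff ℝ 1 G) (hA : LipschitzOnWith K A (uIcc x y)) :
    AbsolutelyContinuousOnInterval (fun s => G (A s)) x y := by
  obtain ⟨K', hK'⟩ := (hG.locallyLipschitz.locallyLipschitzOn).exists_lipschitzOnWith_of_compact
    (isCompact_uIcc.image_of_continuousOn hA.continuousOn)
  exact (hK'.comp hA (mapsTo_image A _)).absolutelyContinuousOnInterval

theorem AbsolutelyContinuousOnInterval.integral_eq_sub_of_ae_hasDerivAt {f f' : ℝ → ℝ}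
    {x y : ℝ} (hf : AbsolutelyContinuousOnInterval f x y)
    (hf' : ∀ᵐ s, s ∈ uIcc x y → HasDerivAt f (f' s) s) :
    ∫ s in x..y, f' s = f y - f x := by
  rw [← hf.integral_deriv_eq_sub]
  refine intervalIntegral.integral_congr_ae ?_
  filter_upwards [hf'] with s hs hs'
  exact (hs (uIoc_subset_uIcc hs')).deriv.symm

@[simp]
theorem cum_zero (a : ℝ → ℝ) : cum a 0 = 0 :=
  intervalIntegral.integral_same

def Admissible (β T : ℝ) (a : ℝ → ℝ) : Prop :=
  Measurable a ∧ ∀ t ∈ Icc 0 T, a t ∈ Icc 0 β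

theorem admissible_threshold {β : ℝ} (hβ : 0 ≤ β) (ψ T : ℝ) :
    Admissible β T (threshold β ψ) :=
  ⟨Measurable.ite measurableSet_Icc measurable_const measurable_const,
    fun t _ => by unfold threshold; split_ifs <;> simp [hβ]⟩

theorem cum_threshold (β : ℝ) {ψ t : ℝ} (hψ : 0 ≤ ψ) (ht : 0 ≤ t) :
    cum (threshold β ψ) t = β * min t ψ := by
  have hind : threshold β ψ = (Icc 0 ψ).indicator (fun _ => β) := by
    ext s; simp [threshold, indicator_apply]
  have hset : Icc 0 ψ ∩ Ioc 0 t = Ioc 0 (min t ψ) := by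
    ext s; simp only [mem_inter_iff, mem_Icc, mem_Ioc, le_min_iff]; grind
  rw [cum, intervalIntegral.integral_of_le ht, hind, integral_indicator measurableSet_Icc,
    Measure.restrict_restrict measurableSet_Icc, hset, setIntegral_const, measureReal_def,
    Real.volume_Ioc, ENNReal.toReal_ofReal (by simp [ht, hψ]), sub_zero, smul_eq_mul, mul_comm]

namespace Admissible

variable {β T : ℝ} {a : ℝ → ℝ}

theorem mono (h : Admissible β T a) {T' : ℝ} (hT' : T' ≤ T) : Admissible β T' a :=
  ⟨h.1, fun t ht => h.2 t ⟨ht.1, ht.2.trans hT'⟩⟩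

theorem intervalIntegrable (h : Admissible β T a) (hT : 0 ≤ T) :
    IntervalIntegrable a volume 0 T := by
  refine (intervalIntegrable_const (c := β)).mono_fun' h.1.aestronglyMeasurable.restrict ?_
  rw [uIoc_of_le hT]
  filter_upwards [ae_restrict_mem measurableSet_Ioc] with t ht
  obtain ⟨h0, hβ⟩ := h.2 t (Ioc_subset_Icc_self ht)
  rwa [Real.norm_of_nonneg h0]

theorem cum_le (h : Admissible β T a) {s : ℝ} (hs : s ∈ Icc 0 T) : cum a s ≤ β * s := by
  have := intervalIntegral.integral_mono_on hs.1 ((h.mono hs.2).intervalIntegrable hs.1)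
    intervalIntegrable_const fun t ht => (h.2 t ⟨ht.1, ht.2.trans hs.2⟩).2
  simpa [cum, mul_comm] using this

theorem lipschitzOnWith_cum (h : Admissible β T a) :
    LipschitzOnWith β.toNNReal (cum a) (Icc 0 T) := by
  refine LipschitzOnWith.of_dist_le_mul fun x hx y hy => ?_
  have hint : ∀ z ∈ Icc 0 T, IntervalIntegrable a volume 0 z := fun z hz =>
    (h.mono hz.2).intervalIntegrable hz.1
  rw [Real.dist_eq, Real.dist_eq, cum, cum,
    intervalIntegral.integral_interval_sub_left (hint x hx) (hint y hy), ← Real.norm_eq_abs]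
  refine intervalIntegral.norm_integral_le_of_norm_le_const (fun t ht => ?_) |>.trans
    (mul_le_mul_of_nonneg_right (le_coe_toNNReal β) (abs_nonneg _))
  have ht' : t ∈ Icc 0 T := ordConnected_Icc.uIcc_subset hy hx (uIoc_subset_uIcc ht)
  obtain ⟨h0, hβ⟩ := h.2 t ht'
  rwa [Real.norm_of_nonneg h0]

theorem continuousOn_cum (h : Admissible β T a) (hT : 0 ≤ T) :
    ContinuousOn (cum a) (uIcc 0 T) :=
  uIcc_of_le hT ▸ h.lipschitzOnWith_cum.continuousOn

theorem ae_hasDerivAt_cum (h : Admissible β T a) (hT : 0 ≤ T) :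
    ∀ᵐ s, s ∈ Icc 0 T → HasDerivAt (cum a) (a s) s := by
  filter_upwards [(h.intervalIntegrable hT).ae_hasDerivAt_integral] with s hs hsT
  rw [← uIcc_of_le hT] at hsT
  exact hs hsT 0 left_mem_uIcc

theorem absolutelyContinuousOnInterval_comp_cum (h : Admissible β T a) (hT : 0 ≤ T)
    {G : ℝ → ℝ} (hG : ContDiff ℝ 1 G) :
    AbsolutelyContinuousOnInterval (fun s => G (cum a s)) 0 T :=
  hG.absolutelyContinuousOnInterval_comp (uIcc_of_le hT ▸ h.lipschitzOnWith_cum)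

theorem integral_one_sub_cum_mul_exp_mul (h : Admissible β T a) (hT : 0 ≤ T) :
    ∫ s in 0..T, (1 - cum a s) * exp (-cum a s) * a s = cum a T * exp (-cum a T) := by
  have hG : ContDiff ℝ 1 fun x : ℝ => x * exp (-x) := by fun_prop
  rw [(h.absolutelyContinuousOnInterval_comp_cum hT hG).integral_eq_sub_of_ae_hasDerivAt,
    cum_zero, zero_mul, sub_zero]
  filter_upwards [h.ae_hasDerivAt_cum hT] with s hs hsT
  rw [uIcc_of_le hT] at hsT
  have hA := hs hsT
  exact (hA.mul hA.fun_neg.exp).congr_deriv (by ring)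

theorem oneLockPayoff_eq (h : Admissible β T a) (hT : 0 ≤ T) {b : ℝ → ℝ}
    (hb : IntervalIntegrable b volume 0 T) (ν : ℝ) :
    oneLockPayoff T ν a b = ∫ s in 0..T, (exp (-cum b s) - ν) * exp (-cum a s) * a s := by
  have hA := h.continuousOn_cum hT
  have hB : ContinuousOn (cum b) (uIcc 0 T) :=
    intervalIntegral.continuousOn_primitive_interval' hb left_mem_uIcc
  have ha := h.intervalIntegrable hT
  rw [oneLockPayoff, mul_assoc, ← h.integral_one_sub_cum_mul_exp_mul hT,
    ← intervalIntegral.integral_const_mul, ← intervalIntegral.integral_sub]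
  · exact intervalIntegral.integral_congr fun s _ => by ring
  · exact ha.continuousOn_mul (by fun_prop)
  · exact (ha.continuousOn_mul (by fun_prop)).const_mul ν

theorem integral_exp_sub_exp_mul_eq (h : Admissible β T a) (hT : 0 ≤ T) (c : ℝ) :
    ∫ s in 0..T, (exp (-(c * s)) - exp (-(c * T))) * exp (-cum a s) * a s
      = ∫ s in 0..T, c * exp (-(c * s)) * (1 - exp (-cum a s)) := by
  have hE : AbsolutelyContinuousOnInterval (fun s => 1 - exp (-cum a s)) 0 T :=
    h.absolutelyContinuousOnInterval_comp_cum hT (G := fun x => 1 - exp (-x)) (by fun_prop)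
  have hD : AbsolutelyContinuousOnInterval (fun s => exp (-(c * s)) - exp (-(c * T))) 0 T :=
    ContDiffOn.absolutelyContinuousOnInterval (by fun_prop)
  have hA := h.continuousOn_cum hT
  -- integration by parts against `1 - exp (-cum a)`: both boundary terms vanish
  have hFTC := (hD.fun_mul hE).integral_eq_sub_of_ae_hasDerivAt
    (f' := fun s => (exp (-(c * s)) - exp (-(c * T))) * exp (-cum a s) * a s
      - c * exp (-(c * s)) * (1 - exp (-cum a s))) ?_
  · rw [sub_self, zero_mul, cum_zero, neg_zero, exp_zero, sub_self, mul_zero, sub_zero,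
      intervalIntegral.integral_sub] at hFTC
    · exact sub_eq_zero.1 hFTC
    · exact (h.intervalIntegrable hT).continuousOn_mul (by fun_prop)
    · exact ContinuousOn.intervalIntegrable (by fun_prop)
  filter_upwards [h.ae_hasDerivAt_cum hT] with s hs hsT
  rw [uIcc_of_le hT] at hsT
  have hcs : HasDerivAt (fun s => exp (-(c * s)) - exp (-(c * T))) (-c * exp (-(c * s))) s := by
    simpa [mul_comm] using ((hasDerivAt_id s).const_mul c).neg.exp.sub_const (exp (-(c * T)))
  exact (hcs.mul ((hs hsT).fun_neg.exp.const_sub 1)).congr_deriv (by ring)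

end Admissible

section ThresholdOpponent

variable {β βj ψ θ T ν : ℝ} {a : ℝ → ℝ}

theorem oneLockPayoff_threshold_eq (h : Admissible β T a) (hβj : 0 ≤ βj) (hθ : 0 ≤ θ)
    (hθψ : θ ≤ ψ) (hψT : ψ ≤ T) (hν : exp (-(βj * θ)) = ν) :
    oneLockPayoff T ν a (threshold βj ψ)
      = (∫ s in 0..θ, βj * exp (-(βj * s)) * (1 - exp (-cum a s)))
        + ∫ s in θ..T, (exp (-cum (threshold βj ψ) s) - ν) * exp (-cum a s) * a s := by
  have hθT := hθψ.trans hψT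
  have hT := hθ.trans hθT
  have hb := admissible_threshold hβj ψ T
  have hI : IntervalIntegrable
      (fun s => (exp (-cum (threshold βj ψ) s) - ν) * exp (-cum a s) * a s) volume 0 T := by
    have hA := h.continuousOn_cum hT
    have hB := hb.continuousOn_cum hT
    exact (h.intervalIntegrable hT).continuousOn_mul (by fun_prop)
  have hθmem : θ ∈ uIcc 0 T := uIcc_of_le hT ▸ ⟨hθ, hθT⟩
  rw [h.oneLockPayoff_eq hT (hb.intervalIntegrable hT),
    ← intervalIntegral.integral_add_adjacent_intervals
      (hI.mono_set (uIcc_subset_uIcc left_mem_uIcc hθmem))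
      (hI.mono_set (uIcc_subset_uIcc hθmem right_mem_uIcc)),
    ← (h.mono hθT).integral_exp_sub_exp_mul_eq hθ βj, hν]
  congr 1
  refine intervalIntegral.integral_congr fun s hs => ?_
  rw [uIcc_of_le hθ] at hs
  rw [cum_threshold βj (hθ.trans hθψ) hs.1, min_eq_left (hs.2.trans hθψ)]

theorem oneLockPayoff_threshold_le (h : Admissible β T a) (hβj : 0 ≤ βj) (hθ : 0 ≤ θ)
    (hθψ : θ ≤ ψ) (hψT : ψ ≤ T) (hν : exp (-(βj * θ)) = ν) :
    oneLockPayoff T ν a (threshold βj ψ)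
      ≤ ∫ s in 0..θ, βj * exp (-(βj * s)) * (1 - exp (-(β * s))) := by
  have hθT := hθψ.trans hψT
  have hT := hθ.trans hθT
  have head : ∫ s in 0..θ, βj * exp (-(βj * s)) * (1 - exp (-cum a s))
      ≤ ∫ s in 0..θ, βj * exp (-(βj * s)) * (1 - exp (-(β * s))) := by
    refine intervalIntegral.integral_mono_on hθ ?_ (Continuous.intervalIntegrable (by fun_prop) _ _)
      fun s hs => ?_
    · have hA := (h.mono hθT).continuousOn_cum hθ
      exact ContinuousOn.intervalIntegrable (by fun_prop)
    · have hA := h.cum_le ⟨hs.1, hs.2.trans hθT⟩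
      gcongr
  have tail : ∫ s in θ..T, (exp (-cum (threshold βj ψ) s) - ν) * exp (-cum a s) * a s ≤ 0 := by
    have := intervalIntegral.integral_nonneg (μ := volume) hθT
      (f := fun s => -((exp (-cum (threshold βj ψ) s) - ν) * exp (-cum a s) * a s))
      fun s hs => ?_
    · rwa [intervalIntegral.integral_neg, neg_nonneg] at this
    have hφ : exp (-cum (threshold βj ψ) s) ≤ ν := by
      rw [cum_threshold βj (hθ.trans hθψ) (hθ.trans hs.1), ← hν]
      gcongr
      exact le_min hs.1 hθψ
    exact neg_nonneg.2 (mul_nonpos_of_nonpos_of_nonneg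
      (mul_nonpos_of_nonpos_of_nonneg (sub_nonpos.2 hφ) (exp_pos _).le)
      (h.2 s ⟨hθ.trans hs.1, hs.2⟩).1)
  rw [oneLockPayoff_threshold_eq h hβj hθ hθψ hψT hν]
  linarith

theorem oneLockPayoff_threshold_threshold (hβ : 0 ≤ β) (hβj : 0 ≤ βj) (hθ : 0 ≤ θ)
    (hθψ : θ ≤ ψ) (hψT : ψ ≤ T) (hν : exp (-(βj * θ)) = ν) :
    oneLockPayoff T ν (threshold β θ) (threshold βj ψ)
      = ∫ s in 0..θ, βj * exp (-(βj * s)) * (1 - exp (-(β * s))) := by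
  have hθT := hθψ.trans hψT
  have tail : ∫ s in θ..T, (exp (-cum (threshold βj ψ) s) - ν)
      * exp (-cum (threshold β θ) s) * threshold β θ s = 0 := by
    refine (intervalIntegral.integral_congr_ae ?_).trans intervalIntegral.integral_zero
    filter_upwards with s hs
    rw [uIoc_of_le hθT] at hs
    simp [threshold, hs.1.not_ge]
  rw [oneLockPayoff_threshold_eq (admissible_threshold hβ θ T) hβj hθ hθψ hψT hν, tail, add_zero]
  refine intervalIntegral.integral_congr fun s hs => ?_
  rw [uIcc_of_le hθ] at hs
  rw [cum_threshold β hθ hs.1, min_eq_left hs.2]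

end ThresholdOpponent

theorem best_response_threshold_general
    (T ν βi βj ψ : ℝ) (hν0 : 0 < ν) (hν1 : ν < 1)
    (hβi : 0 < βi) (hβj : 0 < βj) (hψ : ψ ∈ Icc (0:ℝ) T)
    (hcase : Real.exp (-(βj * ψ)) ≤ ν) :
    ∀ a : ℝ → ℝ, Measurable a → (∀ t ∈ Icc (0:ℝ) T, a t ∈ Icc (0:ℝ) βi) →
      oneLockPayoff T ν a (threshold βj ψ)
        ≤ oneLockPayoff T ν (threshold βi (min (-(Real.log ν) / βj) T))
            (threshold βj ψ) := by
  intro a ha hab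
  set θ := -Real.log ν / βj
  have hν : exp (-(βj * θ)) = ν := by rw [mul_div_cancel₀ _ hβj.ne', neg_neg, exp_log hν0]
  have hθ : 0 ≤ θ := div_nonneg (neg_nonneg.2 (log_nonpos hν0.le hν1.le)) hβj.le
  have hθψ : θ ≤ ψ := by
    rw [← hν, exp_le_exp, neg_le_neg_iff] at hcase
    exact le_of_mul_le_mul_left hcase hβj
  rw [min_eq_left (hθψ.trans hψ.2)]
  exact (oneLockPayoff_threshold_le ⟨ha, hab⟩ hβj.le hθ hθψ hψ.2 hν).trans_eq
    (oneLockPayoff_threshold_threshold hβi.le hβj.le hθ hθψ hψ.2 hν).symm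

/-- Paper's Theorem 2, second case: if agent `j` plays `Γ_{βʲ}(ψ)` and
`ν ≥ e^{−βʲψ}`, then the threshold control `Γ_{βⁱ}(θ)` with
`θ = min{−(ln ν)/βʲ, T}` is a best response of agent `i`. -/
theorem best_response_threshold
    (T ν βi βj ψ : ℝ) (hT : 0 < T) (hν0 : 0 < ν) (hν1 : ν < 1)
    (hβi : 0 < βi) (hβj : 0 < βj) (hψ : ψ ∈ Icc (0:ℝ) T)
    (hcase : Real.exp (-(βj * ψ)) ≤ ν) :
    ∀ a : ℝ → ℝ, Measurable a → (∀ t ∈ Icc (0:ℝ) T, a t ∈ Icc (0:ℝ) βi) →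
      oneLockPayoff T ν a (threshold βj ψ)
        ≤ oneLockPayoff T ν (threshold βi (min (-(Real.log ν) / βj) T))
            (threshold βj ψ) :=
  best_response_threshold_general T ν βi βj ψ hν0 hν1 hβi hβj hψ hcase
end

section
/- Assume 0 < ν < 1 and βⁱ = βʲ = β > 0. Let θ = min{ −(ln ν)/β , T }. Then the pair of time-threshold controls (Γ_β(θ), Γ_β(θ)) is a Nash equilibrium of the one-lock game: Jⁱ(a, Γ_β(θ)) ≤ Jⁱ(Γ_β(θ), Γ_β(θ)) for every admissible control a of agent i, and symmetrically Jʲ(b, Γ_β(θ)) ≤ Jʲ(Γ_β(θ), Γ_β(θ)) for every admissible control b of agent j. (Paper's Theorem 3, case of equal rate bounds.) -/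
open MeasureTheory Real Set

namespace NashAux

/-- interval integrability of a globally bounded measurable function -/
lemma bddII {f : ℝ → ℝ} (hf : Measurable f) {C : ℝ} (hC : ∀ t, |f t| ≤ C)
    (u v : ℝ) : IntervalIntegrable f volume u v := by
  rw [intervalIntegrable_iff]
  refine (integrableOn_const (hs := ?_)).mono'
    hf.aestronglyMeasurable.restrict (ae_of_all _ fun t => by simpa using hC t)
  rw [Set.uIoc]; exact measure_Ioc_lt_top.ne

/-- interval integrability from a bound on the interval -/
lemma bddII' {f : ℝ → ℝ} (hf : Measurable f) {u v C : ℝ} (huv : u ≤ v)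
    (hC : ∀ t ∈ Set.Ioc u v, |f t| ≤ C) : IntervalIntegrable f volume u v := by
  rw [intervalIntegrable_iff, Set.uIoc_of_le huv]
  have hconst : IntegrableOn (fun _ : ℝ => C) (Set.Ioc u v) volume :=
    integrableOn_const (hs := measure_Ioc_lt_top.ne)
  refine Integrable.mono' hconst hf.aestronglyMeasurable.restrict ?_
  exact (ae_restrict_iff' measurableSet_Ioc).2 (ae_of_all _ fun t ht => by
    simpa using hC t ht)

lemma cum_cont {f : ℝ → ℝ} (hf : Measurable f) {C : ℝ} (hC : ∀ t, |f t| ≤ C) :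
    Continuous (cum f) :=
  intervalIntegral.continuous_primitive (fun u v => bddII hf hC u v) 0

lemma cum_add {f : ℝ → ℝ} (hf : Measurable f) {C : ℝ} (hC : ∀ t, |f t| ≤ C)
    (u v : ℝ) : cum f v = cum f u + ∫ s in u..v, f s := by
  rw [cum, cum, intervalIntegral.integral_add_adjacent_intervals (bddII hf hC 0 u) (bddII hf hC u v)]

lemma cum_mono {f : ℝ → ℝ} (hf : Measurable f) {C : ℝ} (hC : ∀ t, |f t| ≤ C)
    (h0 : ∀ t, 0 ≤ f t) : Monotone (cum f) := by
  intro u v huv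
  rw [cum_add hf hC u v]
  have : 0 ≤ ∫ s in u..v, f s :=
    intervalIntegral.integral_nonneg huv (fun x _ => h0 x)
  linarith

lemma ae_ne (σ : ℝ) : ∀ᵐ x : ℝ, x ≠ σ := by
  rw [ae_iff]
  have : {x : ℝ | ¬ x ≠ σ} = {σ} := by ext x; simp
  rw [this]
  exact measure_singleton σ

/-- value of the cumulative of a threshold control -/
lemma cum_zero (f : ℝ → ℝ) : cum f 0 = 0 := by
  rw [cum, intervalIntegral.integral_same]

lemma cum_threshold {β ψ : ℝ} (hβ : 0 ≤ β) (hψ : 0 ≤ ψ) {s : ℝ} (hs : 0 ≤ s) :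
    cum (threshold β ψ) s = β * min s ψ := by
  have hm : Measurable (threshold β ψ) :=
    Measurable.ite measurableSet_Icc measurable_const measurable_const
  have hbd : ∀ t, |threshold β ψ t| ≤ β := by
    intro t; unfold threshold; split
    · rw [abs_of_nonneg hβ]
    · simpa using hβ
  rcases le_or_gt s ψ with h | h
  · rw [min_eq_left h, cum]
    rw [intervalIntegral.integral_congr (g := fun _ => β) ?_]
    · simp [mul_comm]
    · intro t ht
      rw [Set.uIcc_of_le hs] at ht
      have htm : t ∈ Set.Icc 0 ψ := ⟨ht.1, ht.2.trans h⟩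
      simp [threshold, htm]
  · rw [min_eq_right h.le, cum,
      ← intervalIntegral.integral_add_adjacent_intervals (bddII hm hbd 0 ψ) (bddII hm hbd ψ s)]
    have h1 : ∫ t in (0:ℝ)..ψ, threshold β ψ t = β * ψ := by
      rw [intervalIntegral.integral_congr (g := fun _ => β) ?_]
      · simp [mul_comm]
      · intro t ht
        rw [Set.uIcc_of_le hψ] at ht
        simp [threshold, ht]
    have h2 : ∫ t in ψ..s, threshold β ψ t = 0 := by
      rw [intervalIntegral.integral_of_le h.le]
      rw [setIntegral_congr_fun (g := fun _ => (0:ℝ)) measurableSet_Ioc ?_]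
      · simp
      · intro t ht
        have htm : t ∉ Set.Icc 0 ψ := fun hc => absurd hc.2 (not_le.2 ht.1)
        simp [threshold, htm]
    rw [h1, h2]; ring

/-- the layer lemma: integral of the control over a super-level set of its primitive -/
lemma key_layer {T β : ℝ} (hT : 0 < T) (hβ : 0 ≤ β) {f : ℝ → ℝ} (hfm : Measurable f)
    (hf0 : ∀ t, 0 ≤ f t) (hfβ : ∀ t, f t ≤ β) (hfs : ∀ t, t ∉ Set.Icc (0:ℝ) T → f t = 0)
    {y : ℝ} (hy : 0 < y) :
    ∫ s in Set.Ioc (0:ℝ) T, (if y ≤ cum f s then f s else 0)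
      = cum f T - min y (cum f T) := by
  have hβabs : ∀ t, |f t| ≤ β := fun t => abs_le.2 ⟨by linarith [hf0 t], hfβ t⟩
  have hAc : Continuous (cum f) := cum_cont hfm hβabs
  have hmono : Monotone (cum f) := cum_mono hfm hβabs hf0
  rcases le_or_gt y (cum f T) with hyW | hyW
  · set S := Set.Icc (0:ℝ) T ∩ {s | y ≤ cum f s} with hS
    have hclosed : IsClosed S := isClosed_Icc.inter (isClosed_le continuous_const hAc)
    have hne : S.Nonempty := ⟨T, ⟨hT.le, le_refl T⟩, hyW⟩
    have hbddS : BddBelow S := (bddBelow_Icc (a := T) (b := (0:ℝ))).mono Set.inter_subset_left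
    set σ := sInf S with hσdef
    have hσS : σ ∈ S := hclosed.csInf_mem hne hbddS
    have hσ0 : 0 ≤ σ := hσS.1.1
    have hσT : σ ≤ T := hσS.1.2
    have hlt : ∀ s, s < σ → cum f s < y := by
      intro s hs
      rcases lt_or_ge s 0 with h0 | h0
      · have h1 : cum f s ≤ cum f 0 := hmono h0.le
        rw [cum_zero] at h1; linarith
      · by_contra hc
        push_neg at hc
        exact (not_le.2 hs) (csInf_le hbddS ⟨⟨h0, hs.le.trans hσT⟩, hc⟩)
    have hσpos : 0 < σ := by
      rcases lt_or_ge 0 σ with h | h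
      · exact h
      · exfalso
        have h0 : σ = 0 := le_antisymm h hσ0
        have h1 : y ≤ cum f 0 := h0 ▸ hσS.2
        rw [cum_zero] at h1; linarith
    have hAσ : cum f σ = y := by
      refine le_antisymm ?_ hσS.2
      have ht : Filter.Tendsto (cum f) (nhdsWithin σ (Set.Iio σ)) (nhds (cum f σ)) :=
        (hAc.tendsto σ).mono_left nhdsWithin_le_nhds
      exact le_of_tendsto ht (eventually_nhdsWithin_of_forall fun s hs => (hlt s hs).le)
    have hiff : ∀ s ∈ Set.Ioc (0:ℝ) T, ((y ≤ cum f s) ↔ (σ ≤ s)) := by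
      intro s hs
      constructor
      · intro hy2; exact csInf_le hbddS ⟨⟨hs.1.le, hs.2⟩, hy2⟩
      · intro hσs; exact hAσ ▸ hmono hσs
    have hcongr : ∫ s in Set.Ioc (0:ℝ) T, (if y ≤ cum f s then f s else 0)
        = ∫ s in Set.Ioc (0:ℝ) T, (if σ ≤ s then f s else 0) := by
      refine setIntegral_congr_fun measurableSet_Ioc (fun s hs => ?_)
      by_cases h : σ ≤ s
      · rw [if_pos ((hiff s hs).2 h), if_pos h]
      · rw [if_neg (fun hc => h ((hiff s hs).1 hc)), if_neg h]
    rw [hcongr]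
    have hmeas2 : Measurable (fun s => if σ ≤ s then f s else 0) :=
      Measurable.ite measurableSet_Ici hfm measurable_const
    have hbd2 : ∀ t, |(if σ ≤ t then f t else 0)| ≤ β := by
      intro t; split
      · exact hβabs t
      · simpa using hβ
    rw [← intervalIntegral.integral_of_le hT.le,
      ← intervalIntegral.integral_add_adjacent_intervals (bddII hmeas2 hbd2 0 σ)
        (bddII hmeas2 hbd2 σ T)]
    have e1 : ∫ s in (0:ℝ)..σ, (if σ ≤ s then f s else 0) = 0 := by
      rw [intervalIntegral.integral_of_le hσ0]
      rw [setIntegral_congr_ae (g := fun _ => (0:ℝ)) measurableSet_Ioc ?_]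
      · simp
      · filter_upwards [ae_ne σ] with s hsne hs
        rw [if_neg (fun hc => hsne (le_antisymm hs.2 hc))]
    have e2 : ∫ s in σ..T, (if σ ≤ s then f s else 0) = cum f T - y := by
      have e3 : ∫ s in σ..T, (if σ ≤ s then f s else 0) = ∫ s in σ..T, f s := by
        rw [intervalIntegral.integral_of_le hσT, intervalIntegral.integral_of_le hσT]
        exact setIntegral_congr_fun measurableSet_Ioc (fun s hs => if_pos hs.1.le)
      rw [e3]
      have e4 := cum_add hfm hβabs σ T
      rw [hAσ] at e4; linarith
    rw [e1, e2, min_eq_left hyW]; ring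
  · have hz : EqOn (fun s => if y ≤ cum f s then f s else 0) (fun _ => (0:ℝ))
        (Set.Ioc (0:ℝ) T) := by
      intro s hs
      simp only
      rw [if_neg (not_le.2 (lt_of_le_of_lt (hmono hs.2) hyW))]
    rw [setIntegral_congr_fun measurableSet_Ioc hz, min_eq_right hyW.le]
    simp

lemma half {T β : ℝ} (hT : 0 < T) (hβ : 0 ≤ β) {f : ℝ → ℝ} (hfm : Measurable f)
    (hf0 : ∀ t, 0 ≤ f t) (hfβ : ∀ t, f t ≤ β) (hfs : ∀ t, t ∉ Set.Icc (0:ℝ) T → f t = 0)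
    {h : ℝ → ℝ} (hhm : Measurable h) {M : ℝ} (hhM : ∀ y, |h y| ≤ M) (g₀ : ℝ) :
    ∫ s in (0:ℝ)..T, (g₀ + ∫ y in (0:ℝ)..(cum f s), h y) * f s
      = g₀ * cum f T
        + ∫ y, (if 0 < y then h y * (cum f T - min y (cum f T)) else 0) := by
  have hβabs : ∀ t, |f t| ≤ β := fun t => abs_le.2 ⟨by linarith [hf0 t], hfβ t⟩
  have hM0 : 0 ≤ M := (abs_nonneg _).trans (hhM 0)
  have hAc : Continuous (cum f) := cum_cont hfm hβabs
  have hmono : Monotone (cum f) := cum_mono hfm hβabs hf0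
  have hA0 : ∀ s, 0 ≤ s → 0 ≤ cum f s := fun s hs =>
    intervalIntegral.integral_nonneg hs (fun x _ => hf0 x)
  have hAW : ∀ s, cum f s ≤ cum f T := by
    intro s
    rcases le_or_gt s T with hsT | hsT
    · exact hmono hsT
    · have e : cum f s = cum f T + ∫ t in T..s, f t := cum_add hfm hβabs T s
      have hz : ∫ t in T..s, f t = 0 := by
        rw [intervalIntegral.integral_of_le hsT.le]
        rw [setIntegral_congr_fun (g := fun _ => (0:ℝ)) measurableSet_Ioc
          (fun t ht => hfs t (fun hc => absurd hc.2 (not_le.2 ht.1)))]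
        simp
      rw [hz] at e; linarith
  have hAneg : ∀ s, s ≤ 0 → cum f s = 0 := by
    intro s hs
    rw [cum, intervalIntegral.integral_symm]
    rw [intervalIntegral.integral_of_le hs]
    rw [setIntegral_congr_ae (g := fun _ => (0:ℝ)) measurableSet_Ioc ?_]
    · simp
    · filter_upwards [ae_ne (0:ℝ)] with t htne ht
      exact hfs t (fun hc => htne (le_antisymm ht.2 hc.1))
  have hW0 : 0 ≤ cum f T := hA0 T hT.le
  have hAabs : ∀ s, |cum f s| ≤ cum f T := by
    intro s
    rcases le_or_gt s 0 with hs | hs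
    · rw [hAneg s hs]; simpa using hW0
    · rw [abs_of_nonneg (hA0 s hs.le)]; exact hAW s
  set P : ℝ → ℝ := fun s => ∫ y in (0:ℝ)..(cum f s), h y with hPdef
  have hPcont : Continuous P :=
    (intervalIntegral.continuous_primitive (fun u v => bddII hhm hhM u v) 0).comp hAc
  have hPbd : ∀ s, |P s| ≤ M * cum f T := by
    intro s
    have h1 := intervalIntegral.norm_integral_le_of_norm_le_const
      (C := M) (f := h) (a := (0:ℝ)) (b := cum f s) (fun x _ => by simpa using hhM x)
    rw [Real.norm_eq_abs] at h1
    calc |P s| ≤ M * |cum f s - 0| := h1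
      _ = M * |cum f s| := by rw [sub_zero]
      _ ≤ M * cum f T := by nlinarith [hAabs s]
  have hII1 : IntervalIntegrable (fun s => g₀ * f s) volume 0 T := by
    refine bddII (measurable_const.mul hfm) (C := |g₀| * β) (fun t => ?_) 0 T
    rw [Pi.mul_apply, abs_mul]
    exact mul_le_mul_of_nonneg_left (hβabs t) (abs_nonneg g₀)
  have hII2 : IntervalIntegrable (fun s => P s * f s) volume 0 T := by
    refine bddII (hPcont.measurable.mul hfm) (C := M * cum f T * β) (fun t => ?_) 0 T
    rw [Pi.mul_apply, abs_mul]
    exact mul_le_mul (hPbd t) (hβabs t) (abs_nonneg _) (by positivity)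
  have hsplit : ∫ s in (0:ℝ)..T, (g₀ + P s) * f s
      = g₀ * cum f T + ∫ s in (0:ℝ)..T, P s * f s := by
    rw [intervalIntegral.integral_congr
      (g := fun s => g₀ * f s + P s * f s) (fun s _ => by ring)]
    rw [intervalIntegral.integral_add hII1 hII2]
    congr 1
    rw [intervalIntegral.integral_const_mul]
    rfl
  set F : ℝ × ℝ → ℝ :=
    fun p => f p.1 * (if 0 < p.2 ∧ p.2 ≤ cum f p.1 then h p.2 else 0) with hFdef
  have hSmeas : MeasurableSet {p : ℝ × ℝ | 0 < p.2 ∧ p.2 ≤ cum f p.1} := by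
    have e : {p : ℝ × ℝ | 0 < p.2 ∧ p.2 ≤ cum f p.1}
        = {p : ℝ × ℝ | 0 < p.2} ∩ {p : ℝ × ℝ | p.2 ≤ cum f p.1} := rfl
    rw [e]
    exact (measurable_snd measurableSet_Ioi).inter
      (measurableSet_le measurable_snd (hAc.measurable.comp measurable_fst))
  have hFmeas : Measurable F :=
    (hfm.comp measurable_fst).mul
      (Measurable.ite hSmeas (hhm.comp measurable_snd) measurable_const)
  have hFint : Integrable F ((volume.restrict (Set.Ioc (0:ℝ) T)).prod volume) := by
    have hb1 : Integrable (fun _ : ℝ => β) (volume.restrict (Set.Ioc (0:ℝ) T)) :=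
      integrableOn_const (hs := measure_Ioc_lt_top.ne)
    have hb2 : Integrable ((Set.Ioc (0:ℝ) (cum f T)).indicator (fun _ => M)) volume := by
      rw [integrable_indicator_iff measurableSet_Ioc]
      exact integrableOn_const (hs := measure_Ioc_lt_top.ne)
    have hDint := hb1.mul_prod hb2
    refine hDint.mono' hFmeas.aestronglyMeasurable (ae_of_all _ ?_)
    rintro ⟨s, y⟩
    simp only [hFdef, Real.norm_eq_abs]
    by_cases hcnd : 0 < y ∧ y ≤ cum f s
    · have hyW : y ∈ Set.Ioc 0 (cum f T) := ⟨hcnd.1, hcnd.2.trans (hAW s)⟩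
      rw [if_pos hcnd, Set.indicator_of_mem hyW, abs_mul]
      exact mul_le_mul (hβabs s) (hhM y) (abs_nonneg _) hβ
    · rw [if_neg hcnd, mul_zero, abs_zero]
      exact mul_nonneg hβ (Set.indicator_nonneg (fun _ _ => hM0) y)
  have hQ : ∫ s in (0:ℝ)..T, P s * f s
      = ∫ s in Set.Ioc (0:ℝ) T, ∫ y, F (s, y) := by
    rw [intervalIntegral.integral_of_le hT.le]
    refine setIntegral_congr_fun measurableSet_Ioc (fun s hs => ?_)
    have hPs : P s = ∫ y, (if 0 < y ∧ y ≤ cum f s then h y else 0) := by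
      rw [hPdef]
      simp only
      rw [intervalIntegral.integral_of_le (hA0 s hs.1.le),
        ← MeasureTheory.integral_indicator measurableSet_Ioc]
      congr 1
      funext y
      simp [Set.indicator_apply, Set.mem_Ioc]
    rw [mul_comm, hPs, ← MeasureTheory.integral_const_mul]
  have hswap : ∫ s in Set.Ioc (0:ℝ) T, ∫ y, F (s, y)
      = ∫ y, ∫ s in Set.Ioc (0:ℝ) T, F (s, y) :=
    MeasureTheory.integral_integral_swap (by exact hFint)
  have hinner : ∀ y, (∫ s in Set.Ioc (0:ℝ) T, F (s, y))
      = (if 0 < y then h y * (cum f T - min y (cum f T)) else 0) := by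
    intro y
    by_cases hy : 0 < y
    · rw [if_pos hy]
      have e : ∀ s, F (s, y) = h y * (if y ≤ cum f s then f s else 0) := by
        intro s
        simp only [hFdef]
        by_cases hcnd : y ≤ cum f s
        · rw [if_pos ⟨hy, hcnd⟩, if_pos hcnd, mul_comm]
        · rw [if_neg (fun hp => hcnd hp.2), if_neg hcnd, mul_zero, mul_zero]
      simp_rw [e]
      rw [MeasureTheory.integral_const_mul]
      rw [key_layer hT hβ hfm hf0 hfβ hfs hy]
    · rw [if_neg hy]
      have e : ∀ s, F (s, y) = 0 := by
        intro s
        simp only [hFdef]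
        rw [if_neg (fun hp => hy hp.1), mul_zero]
      simp_rw [e]
      simp
  rw [hsplit, hQ, hswap]
  congr 1
  exact MeasureTheory.integral_congr_ae (ae_of_all _ hinner)

lemma I1 {T β : ℝ} (hT : 0 < T) (hβ : 0 ≤ β) {f : ℝ → ℝ} (hfm : Measurable f)
    (hf0 : ∀ t, 0 ≤ f t) (hfβ : ∀ t, f t ≤ β) (hfs : ∀ t, t ∉ Set.Icc (0:ℝ) T → f t = 0)
    {h : ℝ → ℝ} (hhm : Measurable h) {M : ℝ} (hhM : ∀ y, |h y| ≤ M) (g₀ : ℝ) :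
    ∫ s in (0:ℝ)..T, (g₀ + ∫ y in (0:ℝ)..(cum f s), h y) * f s
      = ∫ x in (0:ℝ)..(cum f T), (g₀ + ∫ y in (0:ℝ)..x, h y) := by
  have hβabs : ∀ t, |f t| ≤ β := fun t => abs_le.2 ⟨by linarith [hf0 t], hfβ t⟩
  have hmono : Monotone (cum f) := cum_mono hfm hβabs hf0
  have hA0 : ∀ s, 0 ≤ s → 0 ≤ cum f s := fun s hs =>
    intervalIntegral.integral_nonneg hs (fun x _ => hf0 x)
  have hW0 : 0 ≤ cum f T := hA0 T hT.le
  rcases eq_or_lt_of_le hW0 with hW | hW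
  · have hAz : ∀ s ∈ Set.uIcc (0:ℝ) T, cum f s = 0 := by
      intro s hs
      rw [Set.uIcc_of_le hT.le] at hs
      have h1 : cum f s ≤ cum f T := hmono hs.2
      have h2 : 0 ≤ cum f s := hA0 s hs.1
      linarith
    have e1 : ∫ s in (0:ℝ)..T, (g₀ + ∫ y in (0:ℝ)..(cum f s), h y) * f s
        = ∫ s in (0:ℝ)..T, g₀ * f s := by
      refine intervalIntegral.integral_congr (fun s hs => ?_)
      rw [hAz s hs, intervalIntegral.integral_same, add_zero]
    rw [e1, intervalIntegral.integral_const_mul, ← cum, ← hW]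
    simp
  · have e1 := half hT hβ hfm hf0 hfβ hfs hhm hhM g₀
    set f' : ℝ → ℝ := threshold 1 (cum f T) with hf'def
    have hf'm : Measurable f' :=
      Measurable.ite measurableSet_Icc measurable_const measurable_const
    have hf'0 : ∀ t, 0 ≤ f' t := by
      intro t; rw [hf'def]; unfold threshold; split <;> norm_num
    have hf'1 : ∀ t, f' t ≤ 1 := by
      intro t; rw [hf'def]; unfold threshold; split <;> norm_num
    have hf's : ∀ t, t ∉ Set.Icc (0:ℝ) (cum f T) → f' t = 0 := by
      intro t ht; rw [hf'def]; unfold threshold; rw [if_neg ht]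
    have e2 := half (T := cum f T) (β := 1) hW zero_le_one hf'm hf'0 hf'1 hf's hhm hhM g₀
    have hcum' : ∀ s, 0 ≤ s → cum f' s = min s (cum f T) := by
      intro s hs
      rw [hf'def, cum_threshold zero_le_one hW0 hs, one_mul]
    have hcum'W : cum f' (cum f T) = cum f T := by
      rw [hcum' (cum f T) hW0, min_self]
    rw [hcum'W] at e2
    have e3 : ∫ s in (0:ℝ)..(cum f T), (g₀ + ∫ y in (0:ℝ)..(cum f' s), h y) * f' s
        = ∫ x in (0:ℝ)..(cum f T), (g₀ + ∫ y in (0:ℝ)..x, h y) := by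
      refine intervalIntegral.integral_congr (fun s hs => ?_)
      rw [Set.uIcc_of_le hW0] at hs
      rw [hcum' s hs.1, min_eq_left hs.2]
      have hfs1 : f' s = 1 := by
        rw [hf'def]; unfold threshold; rw [if_pos hs]
      rw [hfs1, mul_one]
    rw [e1, ← e3, e2]

lemma hd_exp (x : ℝ) : HasDerivAt (fun y : ℝ => Real.exp (-y)) (-Real.exp (-x)) x := by
  simpa [Function.comp_def] using ((Real.hasDerivAt_exp (-x)).comp x ((hasDerivAt_id x).neg))

lemma hd_exp2 (x : ℝ) :
    HasDerivAt (fun y : ℝ => Real.exp (-(2*y))) (-2 * Real.exp (-(2*x))) x := by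
  have h1 : HasDerivAt (fun y : ℝ => -(2*y)) (-2) x := by
    simpa [Pi.neg_def] using ((hasDerivAt_id x).const_mul (2:ℝ)).neg
  simpa [mul_comm, Function.comp_def] using (Real.hasDerivAt_exp (-(2*x))).comp x h1

lemma hd_xexp (x : ℝ) :
    HasDerivAt (fun y : ℝ => y * Real.exp (-y)) ((1 - x) * Real.exp (-x)) x := by
  have := (hasDerivAt_id x).mul (hd_exp x)
  refine this.congr_deriv ?_
  simp; ring


lemma abs_mul3_le {x y z X Y Z : ℝ} (hx : |x| ≤ X) (hy : |y| ≤ Y) (hz : |z| ≤ Z) :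
    |x * y * z| ≤ X * Y * Z := by
  have hX : 0 ≤ X := (abs_nonneg x).trans hx
  have hY : 0 ≤ Y := (abs_nonneg y).trans hy
  rw [abs_mul, abs_mul]
  exact mul_le_mul (mul_le_mul hx hy (abs_nonneg y) hX) hz (abs_nonneg z) (mul_nonneg hX hY)

set_option maxHeartbeats 2000000 in
/-- the main one-sided inequality -/
lemma payoff_le (T ν β : ℝ) (hT : 0 < T) (hν0 : 0 < ν) (hν1 : ν < 1) (hβ : 0 < β)
    (a : ℝ → ℝ) (ham : Measurable a) (hab : ∀ t ∈ Set.Icc (0:ℝ) T, a t ∈ Set.Icc (0:ℝ) β) :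
    oneLockPayoff T ν a (threshold β (min (-(Real.log ν) / β) T))
      ≤ oneLockPayoff T ν (threshold β (min (-(Real.log ν) / β) T))
          (threshold β (min (-(Real.log ν) / β) T)) := by
  have hlogν : Real.log ν < 0 := Real.log_neg hν0 hν1
  set θ := min (-(Real.log ν) / β) T with hθdef
  have hθpos : 0 < θ := lt_min (div_pos (by linarith) hβ) hT
  have hθT : θ ≤ T := min_le_right _ _
  set x₀ := β * θ with hx₀def
  have hx₀pos : 0 < x₀ := mul_pos hβ hθpos
  have hx₀T : x₀ ≤ β * T := by nlinarith
  set c := Real.exp (-x₀) with hcdef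
  have hc1 : c ≤ 1 := Real.exp_le_one_iff.2 (by linarith)
  have hcpos : 0 < c := Real.exp_pos _
  have hνc : ν ≤ c := by
    have hθle : θ ≤ -(Real.log ν) / β := min_le_left _ _
    have hle : Real.log ν ≤ -x₀ := by
      rw [hx₀def]
      rw [le_div_iff₀ hβ] at hθle
      nlinarith
    calc ν = Real.exp (Real.log ν) := (Real.exp_log hν0).symm
      _ ≤ c := Real.exp_le_exp.2 hle
  have hcase : c = ν ∨ θ = T := by
    rcases le_or_gt (-(Real.log ν) / β) T with hcs | hcs
    · left
      have e : θ = -(Real.log ν) / β := min_eq_left hcs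
      have e2 : x₀ = -Real.log ν := by
        rw [hx₀def, e]; field_simp
      rw [hcdef, e2, neg_neg, Real.exp_log hν0]
    · right; exact min_eq_right hcs.le
  set bstar := threshold β θ with hbstardef
  have hbm : Measurable bstar := Measurable.ite measurableSet_Icc measurable_const measurable_const
  have hbabs : ∀ t, |bstar t| ≤ β := by
    intro t; rw [hbstardef]; unfold threshold; split
    · rw [abs_of_nonneg hβ.le]
    · simpa using hβ.le
  have hcumb : ∀ s, 0 ≤ s → cum bstar s = β * min s θ := fun s hs =>
    cum_threshold hβ.le hθpos.le hs
  have hcumbT : cum bstar T = x₀ := by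
    rw [hcumb T hT.le, min_eq_right hθT, hx₀def]
  -- modified control
  set f : ℝ → ℝ := fun t => if t ∈ Set.Icc (0:ℝ) T then a t else 0 with hfdef
  have hfm : Measurable f := Measurable.ite measurableSet_Icc ham measurable_const
  have hf0 : ∀ t, 0 ≤ f t := by
    intro t; rw [hfdef]; dsimp only; split
    · exact (hab t (by assumption)).1
    · exact le_refl 0
  have hfβ : ∀ t, f t ≤ β := by
    intro t; rw [hfdef]; dsimp only; split
    · exact (hab t (by assumption)).2
    · exact hβ.le
  have hfs : ∀ t, t ∉ Set.Icc (0:ℝ) T → f t = 0 := fun t ht => if_neg ht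
  have hfabs : ∀ t, |f t| ≤ β := fun t => abs_le.2 ⟨by linarith [hf0 t], hfβ t⟩
  have hAc : Continuous (cum f) := cum_cont hfm hfabs
  have hAmono : Monotone (cum f) := cum_mono hfm hfabs hf0
  have hA0 : ∀ s, 0 ≤ s → 0 ≤ cum f s := fun s hs =>
    intervalIntegral.integral_nonneg hs fun x _ => hf0 x
  have hAβs : ∀ s, 0 ≤ s → cum f s ≤ β * s := by
    intro s hs
    have h1 : ∫ t in (0:ℝ)..s, f t ≤ ∫ t in (0:ℝ)..s, β :=
      intervalIntegral.integral_mono_on hs (bddII hfm hfabs 0 s)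
        intervalIntegrable_const (fun x _ => hfβ x)
    rw [intervalIntegral.integral_const, smul_eq_mul, sub_zero] at h1
    rw [cum, mul_comm]
    exact h1
  have hAβT : ∀ s ∈ Set.Icc (0:ℝ) T, cum f s ∈ Set.Icc (0:ℝ) (β * T) := by
    intro s hs
    exact ⟨hA0 s hs.1, (hAβs s hs.1).trans (by nlinarith [hs.2])⟩
  have hW0 : 0 ≤ cum f T := hA0 T hT.le
  have hWβT : cum f T ≤ β * T := hAβs T hT.le
  -- cum a = cum f on [0,T]
  have hcum_eq : ∀ s ∈ Set.Icc (0:ℝ) T, cum a s = cum f s := by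
    intro s hs
    rw [cum, cum]
    refine intervalIntegral.integral_congr (fun t ht => ?_)
    rw [Set.uIcc_of_le hs.1] at ht
    have htm : t ∈ Set.Icc (0:ℝ) T := ⟨ht.1, ht.2.trans hs.2⟩
    rw [hfdef]; dsimp only; rw [if_pos htm]
  have hpay_eq : oneLockPayoff T ν a bstar = oneLockPayoff T ν f bstar := by
    rw [oneLockPayoff, oneLockPayoff, hcum_eq T ⟨hT.le, le_refl T⟩]
    congr 1
    refine intervalIntegral.integral_congr (fun s hs => ?_)
    rw [Set.uIcc_of_le hT.le] at hs
    rw [hcum_eq s hs]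
    have : f s = a s := by rw [hfdef]; dsimp only; rw [if_pos hs]
    rw [this]
  -- the comparison function g and its a.e. derivative h
  set g : ℝ → ℝ := fun x => (max (Real.exp (-x)) c - ν * x) * Real.exp (-x) with hgdef
  set q : ℝ → ℝ := fun y => if y < x₀ then -2 * Real.exp (-(2*y)) else -c * Real.exp (-y)
    with hqdef
  set h : ℝ → ℝ := fun y => if 0 ≤ y ∧ y ≤ β*T then
      (q y + ν * (y - 1) * Real.exp (-y)) else 0 with hhdef
  have hqcont1 : Continuous fun y : ℝ => -2 * Real.exp (-(2*y)) :=
    continuous_const.mul (Real.continuous_exp.comp (continuous_const.mul continuous_id).neg)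
  have hqcont2 : Continuous fun y : ℝ => -c * Real.exp (-y) :=
    continuous_const.mul (Real.continuous_exp.comp continuous_neg)
  have hpcont : Continuous fun y : ℝ => ν * (y - 1) * Real.exp (-y) :=
    ((continuous_const.mul (continuous_id.sub continuous_const)).mul
      (Real.continuous_exp.comp continuous_neg))
  have hqm : Measurable q := by
    rw [hqdef]
    exact Measurable.ite measurableSet_Iio hqcont1.measurable hqcont2.measurable
  have hqbd : ∀ y, 0 ≤ y → |q y| ≤ 2 := by
    intro y hy
    have he1 : Real.exp (-(2*y)) ≤ 1 := Real.exp_le_one_iff.2 (by linarith)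
    have he2 : Real.exp (-y) ≤ 1 := Real.exp_le_one_iff.2 (by linarith)
    have hp1 : 0 < Real.exp (-(2*y)) := Real.exp_pos _
    have hp2 : 0 < Real.exp (-y) := Real.exp_pos _
    rw [hqdef]; dsimp only; split
    · rw [abs_mul]
      calc |(-2 : ℝ)| * |Real.exp (-(2*y))| = 2 * Real.exp (-(2*y)) := by
            rw [abs_of_pos hp1]; norm_num
        _ ≤ 2 := by linarith
    · rw [abs_mul, abs_neg, abs_of_pos hcpos, abs_of_pos hp2]
      nlinarith
  have hhm : Measurable h := by
    rw [hhdef]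
    refine Measurable.ite ?_ (hqm.add hpcont.measurable) measurable_const
    exact (measurableSet_Ici.inter measurableSet_Iic : MeasurableSet
      ({y : ℝ | 0 ≤ y} ∩ {y : ℝ | y ≤ β*T}))
  have hhM : ∀ y, |h y| ≤ 2 + (β*T + 1) := by
    intro y
    have hβT : 0 < β * T := mul_pos hβ hT
    rw [hhdef]; dsimp only; split
    case isTrue hy =>
      refine (abs_add_le _ _).trans ?_
      have h1 : |q y| ≤ 2 := hqbd y hy.1
      have h2 : |ν * (y - 1) * Real.exp (-y)| ≤ β*T + 1 := by
        have he2 : Real.exp (-y) ≤ 1 := Real.exp_le_one_iff.2 (by linarith [hy.1])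
        have ha : |ν| ≤ 1 := abs_le.2 ⟨by linarith, hν1.le⟩
        have hb : |y - 1| ≤ β*T + 1 := abs_le.2 ⟨by linarith [hy.1], by linarith [hy.2]⟩
        have hcc : |Real.exp (-y)| ≤ 1 := by rw [abs_of_pos (Real.exp_pos _)]; exact he2
        calc |ν * (y - 1) * Real.exp (-y)| ≤ 1 * (β*T + 1) * 1 := abs_mul3_le ha hb hcc
          _ = β*T + 1 := by ring
      linarith
    case isFalse => simpa using by linarith
  -- FTC computations
  have hFTC2 : ∀ u v : ℝ, ∫ y in u..v, -2 * Real.exp (-(2*y))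
      = Real.exp (-(2*v)) - Real.exp (-(2*u)) := by
    intro u v
    exact intervalIntegral.integral_eq_sub_of_hasDerivAt (fun x _ => hd_exp2 x)
      (hqcont1.intervalIntegrable u v)
  have hFTC1 : ∀ u v : ℝ, ∫ y in u..v, -c * Real.exp (-y)
      = c * Real.exp (-v) - c * Real.exp (-u) := by
    intro u v
    refine intervalIntegral.integral_eq_sub_of_hasDerivAt
      (f := fun y => c * Real.exp (-y)) (fun x _ => ?_)
      (hqcont2.intervalIntegrable u v)
    refine ((hd_exp x).const_mul c).congr_deriv ?_
    ring
  have hFTCx : ∀ u v : ℝ, ∫ y in u..v, ν * (y - 1) * Real.exp (-y)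
      = (-(ν * (v * Real.exp (-v)))) - (-(ν * (u * Real.exp (-u)))) := by
    intro u v
    refine intervalIntegral.integral_eq_sub_of_hasDerivAt
      (f := fun y => -(ν * (y * Real.exp (-y)))) (fun x _ => ?_)
      (hpcont.intervalIntegrable u v)
    refine ((hd_xexp x).const_mul ν).neg.congr_deriv ?_
    ring
  have hFTCnu : ∀ u v : ℝ, ∫ x in u..v, ν * (1 - x) * Real.exp (-x)
      = ν * (v * Real.exp (-v)) - ν * (u * Real.exp (-u)) := by
    intro u v
    have hcont : Continuous fun x : ℝ => ν * (1 - x) * Real.exp (-x) :=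
      ((continuous_const.mul (continuous_const.sub continuous_id)).mul
        (Real.continuous_exp.comp continuous_neg))
    refine intervalIntegral.integral_eq_sub_of_hasDerivAt
      (f := fun y => ν * (y * Real.exp (-y))) (fun x _ => ?_)
      (hcont.intervalIntegrable u v)
    refine ((hd_xexp x).const_mul ν).congr_deriv ?_
    ring
  have hexp2 : ∀ x : ℝ, Real.exp (-(2*x)) = Real.exp (-x) * Real.exp (-x) := by
    intro x
    rw [← Real.exp_add]
    congr 1
    ring
  have hFTCg : ∀ x ∈ Set.Icc (0:ℝ) (β*T), 1 + ∫ y in (0:ℝ)..x, h y = g x := by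
    intro x hx
    have hx0 : 0 ≤ x := hx.1
    have hxT : x ≤ β*T := hx.2
    have e0 : ∫ y in (0:ℝ)..x, h y
        = ∫ y in (0:ℝ)..x, (q y + ν * (y - 1) * Real.exp (-y)) := by
      refine intervalIntegral.integral_congr (fun t ht => ?_)
      rw [Set.uIcc_of_le hx0] at ht
      rw [hhdef]; dsimp only; rw [if_pos ⟨ht.1, ht.2.trans hxT⟩]
    have hqII : ∀ u v : ℝ, 0 ≤ u → u ≤ v → IntervalIntegrable q volume u v :=
      fun u v hu huv => bddII' hqm huv (fun t ht => hqbd t (hu.trans ht.1.le))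
    rw [e0, intervalIntegral.integral_add (hqII 0 x le_rfl hx0)
      (hpcont.intervalIntegrable 0 x), hFTCx 0 x]
    have hq0x₀ : ∫ y in (0:ℝ)..x₀, q y = Real.exp (-(2*x₀)) - 1 := by
      have eq1 : ∫ y in (0:ℝ)..x₀, q y = ∫ y in (0:ℝ)..x₀, -2 * Real.exp (-(2*y)) := by
        refine intervalIntegral.integral_congr_ae ?_
        filter_upwards [ae_ne x₀] with y hyne hyI
        rw [Set.uIoc_of_le hx₀pos.le] at hyI
        rw [hqdef]; dsimp only
        rw [if_pos (lt_of_le_of_ne hyI.2 hyne)]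
      rw [eq1, hFTC2 0 x₀]
      norm_num
    rcases le_or_gt x x₀ with hxx | hxx
    · have eq1 : ∫ y in (0:ℝ)..x, q y = ∫ y in (0:ℝ)..x, -2 * Real.exp (-(2*y)) := by
        refine intervalIntegral.integral_congr_ae ?_
        filter_upwards [ae_ne x₀] with y hyne hyI
        rw [Set.uIoc_of_le hx0] at hyI
        rw [hqdef]; dsimp only
        rw [if_pos (lt_of_le_of_ne (hyI.2.trans hxx) hyne)]
      rw [eq1, hFTC2 0 x]
      have hmax : max (Real.exp (-x)) c = Real.exp (-x) := by
        refine max_eq_left ?_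
        rw [hcdef]
        exact Real.exp_le_exp.2 (by linarith)
      rw [hgdef]; dsimp only; rw [hmax, hexp2 x]
      norm_num
      ring
    · have hsplit2 : ∫ y in (0:ℝ)..x, q y
          = (∫ y in (0:ℝ)..x₀, q y) + ∫ y in x₀..x, q y :=
        (intervalIntegral.integral_add_adjacent_intervals (hqII 0 x₀ le_rfl hx₀pos.le)
          (hqII x₀ x hx₀pos.le hxx.le)).symm
      have eq2 : ∫ y in x₀..x, q y = ∫ y in x₀..x, -c * Real.exp (-y) := by
        refine intervalIntegral.integral_congr (fun y hy => ?_)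
        rw [Set.uIcc_of_le hxx.le] at hy
        rw [hqdef]; dsimp only
        rw [if_neg (not_lt.2 hy.1)]
      have hmax : max (Real.exp (-x)) c = c := by
        refine max_eq_right ?_
        rw [hcdef]
        exact Real.exp_le_exp.2 (by linarith)
      rw [hsplit2, hq0x₀, eq2, hFTC1 x₀ x]
      rw [hgdef]; dsimp only; rw [hmax, hexp2 x₀, ← hcdef]
      norm_num
      ring
  have hgc : Continuous g := by
    rw [hgdef]
    exact (((Real.continuous_exp.comp continuous_neg).max continuous_const).sub
      (continuous_const.mul continuous_id)).mul (Real.continuous_exp.comp continuous_neg)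
  have hKmono : ∀ X1 X2 : ℝ, 0 ≤ X1 → X1 ≤ X2 →
      (∫ x in (0:ℝ)..X1, g x) - ν * X1 * Real.exp (-X1)
        ≤ (∫ x in (0:ℝ)..X2, g x) - ν * X2 * Real.exp (-X2) := by
    intro X1 X2 h01 h12
    have hcont : Continuous fun x : ℝ => ν * (1 - x) * Real.exp (-x) :=
      ((continuous_const.mul (continuous_const.sub continuous_id)).mul
        (Real.continuous_exp.comp continuous_neg))
    have hadd : (∫ x in (0:ℝ)..X2, g x) = (∫ x in (0:ℝ)..X1, g x) + ∫ x in X1..X2, g x :=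
      (intervalIntegral.integral_add_adjacent_intervals (hgc.intervalIntegrable _ _)
        (hgc.intervalIntegrable _ _)).symm
    have hνd := hFTCnu X1 X2
    have hsub : (∫ x in X1..X2, g x) - ∫ x in X1..X2, ν*(1-x)*Real.exp (-x)
        = ∫ x in X1..X2, (g x - ν*(1-x)*Real.exp (-x)) :=
      (intervalIntegral.integral_sub (hgc.intervalIntegrable _ _)
        (hcont.intervalIntegrable _ _)).symm
    have hpos : 0 ≤ ∫ x in X1..X2, (g x - ν*(1-x)*Real.exp (-x)) := by
      refine intervalIntegral.integral_nonneg h12 (fun x _ => ?_)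
      have he : 0 < Real.exp (-x) := Real.exp_pos _
      have hmax : ν ≤ max (Real.exp (-x)) c := hνc.trans (le_max_right _ _)
      rw [hgdef]; dsimp only
      nlinarith
    linarith
  have hKstep : (∫ x in (0:ℝ)..(β*T), g x) - ν * (β*T) * Real.exp (-(β*T))
      = (∫ x in (0:ℝ)..x₀, g x) - ν * x₀ * Real.exp (-x₀) := by
    have hcont : Continuous fun x : ℝ => ν * (1 - x) * Real.exp (-x) :=
      ((continuous_const.mul (continuous_const.sub continuous_id)).mul
        (Real.continuous_exp.comp continuous_neg))
    have hadd : (∫ x in (0:ℝ)..(β*T), g x) = (∫ x in (0:ℝ)..x₀, g x) + ∫ x in x₀..(β*T), g x :=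
      (intervalIntegral.integral_add_adjacent_intervals (hgc.intervalIntegrable _ _)
        (hgc.intervalIntegrable _ _)).symm
    have hνd := hFTCnu x₀ (β*T)
    have hsub : (∫ x in x₀..(β*T), g x) - ∫ x in x₀..(β*T), ν*(1-x)*Real.exp (-x)
        = ∫ x in x₀..(β*T), (g x - ν*(1-x)*Real.exp (-x)) :=
      (intervalIntegral.integral_sub (hgc.intervalIntegrable _ _)
        (hcont.intervalIntegrable _ _)).symm
    have hzero : ∫ x in x₀..(β*T), (g x - ν*(1-x)*Real.exp (-x)) = 0 := by
      rcases hcase with hcν | hθT'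
      · rw [intervalIntegral.integral_congr (g := fun _ => (0:ℝ)) ?_]
        · simp
        · intro x hx
          rw [Set.uIcc_of_le hx₀T] at hx
          have hmax : max (Real.exp (-x)) c = c := by
            refine max_eq_right ?_
            rw [hcdef]
            exact Real.exp_le_exp.2 (by linarith [hx.1])
          rw [hgdef]; dsimp only; rw [hmax, hcν]; ring
      · have : x₀ = β*T := by rw [hx₀def, hθT']
        rw [this, intervalIntegral.integral_same]
    linarith
  -- pointwise comparison on [0,T]
  have hpw : ∀ s ∈ Set.Icc (0:ℝ) T,
      (Real.exp (-(cum bstar s)) - ν * cum f s) * Real.exp (-(cum f s)) * f s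
        ≤ g (cum f s) * f s := by
    intro s hs
    have hφ : Real.exp (-(cum bstar s)) ≤ max (Real.exp (-(cum f s))) c := by
      rw [hcumb s hs.1]
      rcases le_or_gt s θ with hsθ | hsθ
      · rw [min_eq_left hsθ]
        refine le_trans (Real.exp_le_exp.2 ?_) (le_max_left _ _)
        have := hAβs s hs.1; linarith
      · rw [min_eq_right hsθ.le, ← hx₀def, ← hcdef]
        exact le_max_right _ _
    have hfpos := hf0 s
    have hepos : 0 < Real.exp (-(cum f s)) := Real.exp_pos _
    have key : 0 ≤ (max (Real.exp (-(cum f s))) c - Real.exp (-(cum bstar s)))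
        * Real.exp (-(cum f s)) * f s :=
      mul_nonneg (mul_nonneg (sub_nonneg.2 hφ) hepos.le) hfpos
    rw [hgdef]; dsimp only
    nlinarith [key]
  -- integrability of both integrands
  have hcumbc : Continuous (cum bstar) := cum_cont hbm hbabs
  have hIIlhs : IntervalIntegrable
      (fun s => (Real.exp (-(cum bstar s)) - ν * cum f s) * Real.exp (-(cum f s)) * f s)
      volume 0 T := by
    refine bddII' ?_ hT.le (C := (1 + ν*(β*T)) * 1 * β) (fun s hs => ?_)
    · exact (((Real.continuous_exp.comp hcumbc.neg).sub
        (continuous_const.mul hAc)).mul (Real.continuous_exp.comp hAc.neg)).measurable.mul hfm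
    · have hsIcc : s ∈ Set.Icc (0:ℝ) T := ⟨hs.1.le, hs.2⟩
      have hB0 : 0 ≤ cum bstar s := by
        rw [hcumb s hsIcc.1]
        have : (0:ℝ) ≤ min s θ := le_min hsIcc.1 hθpos.le
        positivity
      have hA0s := (hAβT s hsIcc).1
      have hAT := (hAβT s hsIcc).2
      refine abs_mul3_le (abs_le.2 ⟨?_, ?_⟩) ?_ (hfabs s)
      · have : 0 < Real.exp (-(cum bstar s)) := Real.exp_pos _
        nlinarith
      · have : Real.exp (-(cum bstar s)) ≤ 1 := Real.exp_le_one_iff.2 (by linarith)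
        nlinarith
      · rw [abs_of_pos (Real.exp_pos _)]
        exact Real.exp_le_one_iff.2 (by linarith)
  have hIIrhs : IntervalIntegrable (fun s => g (cum f s) * f s) volume 0 T := by
    refine bddII' ((hgc.comp hAc).measurable.mul hfm) hT.le
      (C := (1 + ν*(β*T)) * 1 * β) (fun s hs => ?_)
    have hsIcc : s ∈ Set.Icc (0:ℝ) T := ⟨hs.1.le, hs.2⟩
    have hA0s := (hAβT s hsIcc).1
    have hAT := (hAβT s hsIcc).2
    simp only [hgdef]
    refine abs_mul3_le (abs_le.2 ⟨?_, ?_⟩) ?_ (hfabs s)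
    · have h1 : 0 < Real.exp (-(cum f s)) := Real.exp_pos _
      have h2 : c ≤ max (Real.exp (-(cum f s))) c := le_max_right _ _
      nlinarith
    · have h1 : Real.exp (-(cum f s)) ≤ 1 := Real.exp_le_one_iff.2 (by linarith)
      have h2 : max (Real.exp (-(cum f s))) c ≤ 1 := max_le h1 hc1
      nlinarith
    · rw [abs_of_pos (Real.exp_pos _)]
      exact Real.exp_le_one_iff.2 (by linarith)
  -- main inequality between the integrals
  have hstep2 : (∫ s in (0:ℝ)..T,
        (Real.exp (-(cum bstar s)) - ν * cum f s) * Real.exp (-(cum f s)) * f s)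
      ≤ ∫ x in (0:ℝ)..(cum f T), g x := by
    have hmono1 : (∫ s in (0:ℝ)..T,
          (Real.exp (-(cum bstar s)) - ν * cum f s) * Real.exp (-(cum f s)) * f s)
        ≤ ∫ s in (0:ℝ)..T, g (cum f s) * f s :=
      intervalIntegral.integral_mono_on hT.le hIIlhs hIIrhs hpw
    have heq : ∫ s in (0:ℝ)..T, g (cum f s) * f s
        = ∫ s in (0:ℝ)..T, (1 + ∫ y in (0:ℝ)..(cum f s), h y) * f s := by
      refine intervalIntegral.integral_congr (fun s hs => ?_)
      rw [Set.uIcc_of_le hT.le] at hs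
      rw [hFTCg (cum f s) (hAβT s hs)]
    have hI1 := I1 hT hβ.le hfm hf0 hfβ hfs hhm hhM 1
    have heq2 : ∫ x in (0:ℝ)..(cum f T), (1 + ∫ y in (0:ℝ)..x, h y)
        = ∫ x in (0:ℝ)..(cum f T), g x := by
      refine intervalIntegral.integral_congr (fun x hx => ?_)
      rw [Set.uIcc_of_le hW0] at hx
      exact hFTCg x ⟨hx.1, hx.2.trans hWβT⟩
    rw [heq, hI1, heq2] at hmono1
    exact hmono1
  -- value of the equilibrium payoff
  have hpayb : oneLockPayoff T ν bstar bstar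
      = (∫ x in (0:ℝ)..x₀, g x) - ν * x₀ * Real.exp (-x₀) := by
    rw [oneLockPayoff, hcumbT]
    congr 1
    have hIIb : ∀ u v : ℝ, 0 ≤ u → u ≤ v → IntervalIntegrable
        (fun s => (Real.exp (-(cum bstar s)) - ν * cum bstar s)
          * Real.exp (-(cum bstar s)) * bstar s) volume u v := by
      intro u v hu huv
      refine bddII' ?_ huv (C := (1 + ν*(β*T)) * 1 * β) (fun s hs => ?_)
      · exact (((Real.continuous_exp.comp hcumbc.neg).sub
          (continuous_const.mul hcumbc)).mul (Real.continuous_exp.comp hcumbc.neg)).measurable.mul hbm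
      · have hs0 : 0 ≤ s := hu.trans hs.1.le
        have hB0 : 0 ≤ cum bstar s := by
          rw [hcumb s hs0]
          have : (0:ℝ) ≤ min s θ := le_min hs0 hθpos.le
          positivity
        have hBT : cum bstar s ≤ β * T := by
          rw [hcumb s hs0]
          have h1 : min s θ ≤ θ := min_le_right _ _
          nlinarith
        refine abs_mul3_le (abs_le.2 ⟨?_, ?_⟩) ?_ (hbabs s)
        · have : 0 < Real.exp (-(cum bstar s)) := Real.exp_pos _
          nlinarith
        · have : Real.exp (-(cum bstar s)) ≤ 1 := Real.exp_le_one_iff.2 (by linarith)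
          nlinarith
        · rw [abs_of_pos (Real.exp_pos _)]
          exact Real.exp_le_one_iff.2 (by linarith)
    rw [← intervalIntegral.integral_add_adjacent_intervals (hIIb 0 θ le_rfl hθpos.le)
      (hIIb θ T hθpos.le hθT)]
    have hz : (∫ s in θ..T, (Real.exp (-(cum bstar s)) - ν * cum bstar s)
        * Real.exp (-(cum bstar s)) * bstar s) = 0 := by
      rw [intervalIntegral.integral_of_le hθT]
      rw [setIntegral_congr_fun (g := fun _ => (0:ℝ)) measurableSet_Ioc ?_]
      · simp
      · intro s hs
        have hb0 : bstar s = 0 := by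
          rw [hbstardef]; unfold threshold
          rw [if_neg (fun hcon => absurd hcon.2 (not_le.2 hs.1))]
        simp only [hb0, mul_zero]
    rw [hz, add_zero]
    have hmain : ∫ s in (0:ℝ)..θ, (Real.exp (-(cum bstar s)) - ν * cum bstar s)
          * Real.exp (-(cum bstar s)) * bstar s
        = ∫ s in (0:ℝ)..θ, β * ((Real.exp (-(β*s)) - ν * (β*s)) * Real.exp (-(β*s))) := by
      refine intervalIntegral.integral_congr (fun s hs => ?_)
      rw [Set.uIcc_of_le hθpos.le] at hs
      rw [hcumb s hs.1, min_eq_left hs.2]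
      have hb1 : bstar s = β := by
        rw [hbstardef]; unfold threshold; rw [if_pos hs]
      rw [hb1]; ring
    rw [hmain]
    have hsub := intervalIntegral.smul_integral_comp_mul_left
      (f := fun x => (Real.exp (-x) - ν * x) * Real.exp (-x)) (a := (0:ℝ)) (b := θ) β
    rw [intervalIntegral.integral_const_mul]
    rw [smul_eq_mul, mul_zero] at hsub
    rw [hsub, ← hx₀def]
    refine intervalIntegral.integral_congr (fun x hx => ?_)
    rw [Set.uIcc_of_le hx₀pos.le] at hx
    have hmax : max (Real.exp (-x)) c = Real.exp (-x) := by
      refine max_eq_left ?_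
      rw [hcdef]
      exact Real.exp_le_exp.2 (by linarith [hx.2])
    rw [hgdef]; dsimp only; rw [hmax]
  -- conclude
  calc oneLockPayoff T ν a bstar = oneLockPayoff T ν f bstar := hpay_eq
    _ ≤ (∫ x in (0:ℝ)..(cum f T), g x) - ν * cum f T * Real.exp (-(cum f T)) := by
        rw [oneLockPayoff]; linarith [hstep2]
    _ ≤ (∫ x in (0:ℝ)..(β*T), g x) - ν * (β*T) * Real.exp (-(β*T)) :=
        hKmono (cum f T) (β*T) hW0 hWβT
    _ = (∫ x in (0:ℝ)..x₀, g x) - ν * x₀ * Real.exp (-x₀) := hKstep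
    _ = oneLockPayoff T ν bstar bstar := hpayb.symm

end NashAux

/-- Paper's Theorem 3, case of equal rate bounds `βⁱ = βʲ = β`: with
`θ = min{−(ln ν)/β, T}`, the symmetric pair `(Γ_β(θ), Γ_β(θ))` is a Nash
equilibrium of the one-lock game. -/
theorem nash_equilibrium_one_lock_symmetric
    (T ν β : ℝ) (hT : 0 < T) (hν0 : 0 < ν) (hν1 : ν < 1) (hβ : 0 < β) :
    (∀ a : ℝ → ℝ, Measurable a → (∀ t ∈ Icc (0:ℝ) T, a t ∈ Icc (0:ℝ) β) →
        oneLockPayoff T ν a (threshold β (min (-(Real.log ν) / β) T))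
          ≤ oneLockPayoff T ν (threshold β (min (-(Real.log ν) / β) T))
              (threshold β (min (-(Real.log ν) / β) T))) ∧
    (∀ b : ℝ → ℝ, Measurable b → (∀ t ∈ Icc (0:ℝ) T, b t ∈ Icc (0:ℝ) β) →
        oneLockPayoff T ν b (threshold β (min (-(Real.log ν) / β) T))
          ≤ oneLockPayoff T ν (threshold β (min (-(Real.log ν) / β) T))
              (threshold β (min (-(Real.log ν) / β) T))) :=
  ⟨fun a ha hab => NashAux.payoff_le T ν β hT hν0 hν1 hβ a ha hab,
   fun b hb hbb => NashAux.payoff_le T ν β hT hν0 hν1 hβ b hb hbb⟩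
end

section
/- Assume 0 < ν < 1 and βʲ ≥ βⁱ > 0. Define the best-response threshold maps BRⁱ(ψ) = T if ν < e^{−βʲψ} and BRⁱ(ψ) = min{ −(ln ν)/βʲ , T } otherwise, and BRʲ(ψ) = T if ν < e^{−βⁱψ} and BRʲ(ψ) = min{ −(ln ν)/βⁱ , T } otherwise. Then there is exactly one pair (ψⁱ, ψʲ) ∈ [0,T]² with ψⁱ = BRⁱ(ψʲ) and ψʲ = BRʲ(ψⁱ); it equals (min{−(ln ν)/βʲ, T}, min{−(ln ν)/βⁱ, T}) when βⁱ = βʲ, and (min{−(ln ν)/βʲ, T}, T) when βʲ > βⁱ. (Uniqueness of the mutual-best-response threshold pair, claimed after the paper's Theorem 3.) -/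
/-!
Writing `a = -(ln ν)/βʲ ≤ b = -(ln ν)/βⁱ`, agent `i`'s best response to `ψ` is `T` when `ψ < a`
and `min a T` otherwise, and symmetrically for `j` with `b`. Every best response of `j` is at
least `min b T ≥ min a T`, which is exactly where `i`'s best response becomes the constant
`min a T`. So in any mutual best response `ψⁱ = min a T`, and then `ψʲ` is `j`'s best response
to it: `min b T` when `a = b`, and `T` when `a < b`.
-/

open Real Set

theorem lt_exp_neg_mul_iff_lt_div {ν β ψ : ℝ} (hν : 0 < ν) (hβ : 0 < β) :
    ν < exp (-(β * ψ)) ↔ ψ < -log ν / β := by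
  rw [← log_lt_iff_lt_exp hν, lt_div_iff₀' hβ, lt_neg]

noncomputable def thresholdResponse (T c ψ : ℝ) : ℝ :=
  if ψ < c then T else min c T

section ThresholdResponse

variable {T c ψ : ℝ}

theorem min_le_thresholdResponse : min c T ≤ thresholdResponse T c ψ := by
  unfold thresholdResponse
  split_ifs
  exacts [min_le_right c T, le_rfl]

theorem thresholdResponse_of_lt (h : ψ < c) : thresholdResponse T c ψ = T :=
  if_pos h

theorem thresholdResponse_of_min_le (h : min c T ≤ ψ) :
    thresholdResponse T c ψ = min c T := by
  unfold thresholdResponse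
  split_ifs with hψc
  · have hTc : T < c := (min_lt_iff.1 (h.trans_lt hψc)).resolve_left (lt_irrefl c)
    exact (min_eq_right hTc.le).symm
  · rfl

theorem thresholdResponse_mem_Icc (hc : 0 ≤ c) (hT : 0 ≤ T) :
    thresholdResponse T c ψ ∈ Icc 0 T := by
  refine ⟨(le_min hc hT).trans min_le_thresholdResponse, ?_⟩
  unfold thresholdResponse
  split_ifs
  exacts [le_rfl, min_le_right c T]

theorem thresholdResponse_mutual_iff {a b ψi ψj : ℝ} (hab : a ≤ b) :
    (ψi = thresholdResponse T a ψj ∧ ψj = thresholdResponse T b ψi) ↔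
      (ψi = min a T ∧ ψj = thresholdResponse T b (min a T)) := by
  have min_le_of_response {ψ : ℝ} (hj : ψj = thresholdResponse T b ψ) : min a T ≤ ψj :=
    hj ▸ (min_le_min_right T hab).trans min_le_thresholdResponse
  constructor
  · rintro ⟨hi, hj⟩
    have hψi : ψi = min a T := hi.trans (thresholdResponse_of_min_le (min_le_of_response hj))
    exact ⟨hψi, hψi ▸ hj⟩
  · rintro ⟨rfl, hj⟩
    exact ⟨(thresholdResponse_of_min_le (min_le_of_response hj)).symm, hj⟩

end ThresholdResponse

/-- Uniqueness of the mutual-best-response threshold pair, claimed after the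
paper's Theorem 3.  With `BRⁱ(ψ) = T` if `ν < e^{−βʲψ}` and
`min{−(ln ν)/βʲ, T}` otherwise (and symmetrically `BRʲ` with `βⁱ`), there is
exactly one pair `(ψⁱ, ψʲ) ∈ [0,T]²` with `ψⁱ = BRⁱ(ψʲ)` and
`ψʲ = BRʲ(ψⁱ)`; it equals `(min{−(ln ν)/βʲ, T}, min{−(ln ν)/βⁱ, T})` when
`βⁱ = βʲ`, and `(min{−(ln ν)/βʲ, T}, T)` when `βʲ > βⁱ`. -/
theorem unique_mutual_best_response_thresholds
    (T ν βi βj : ℝ) (hT : 0 < T) (hν0 : 0 < ν) (hν1 : ν < 1)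
    (hβi : 0 < βi) (hβij : βi ≤ βj)
    (BRi BRj : ℝ → ℝ)
    (hBRi : ∀ ψ : ℝ, BRi ψ =
      if ν < Real.exp (-(βj * ψ)) then T else min (-(Real.log ν) / βj) T)
    (hBRj : ∀ ψ : ℝ, BRj ψ =
      if ν < Real.exp (-(βi * ψ)) then T else min (-(Real.log ν) / βi) T)
    (P : ℝ × ℝ)
    (hP : P = if βi = βj
      then (min (-(Real.log ν) / βj) T, min (-(Real.log ν) / βi) T)
      else (min (-(Real.log ν) / βj) T, T)) :
    (P.1 ∈ Icc (0:ℝ) T ∧ P.2 ∈ Icc (0:ℝ) T ∧ P.1 = BRi P.2 ∧ P.2 = BRj P.1) ∧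
    (∀ ψi ψj : ℝ, ψi ∈ Icc (0:ℝ) T → ψj ∈ Icc (0:ℝ) T →
      ψi = BRi ψj → ψj = BRj ψi → (ψi, ψj) = P) := by
  have hL : 0 < -log ν := neg_pos.2 (log_neg hν0 hν1)
  have hβj : 0 < βj := hβi.trans_le hβij
  have hab : -log ν / βj ≤ -log ν / βi := div_le_div_of_nonneg_left hL.le hβi hβij
  have hBRi' : BRi = thresholdResponse T (-log ν / βj) := funext fun ψ => by
    simp only [hBRi, thresholdResponse, lt_exp_neg_mul_iff_lt_div hν0 hβj]
  have hBRj' : BRj = thresholdResponse T (-log ν / βi) := funext fun ψ => by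
    simp only [hBRj, thresholdResponse, lt_exp_neg_mul_iff_lt_div hν0 hβi]
  have hP' : P = (min (-log ν / βj) T,
      thresholdResponse T (-log ν / βi) (min (-log ν / βj) T)) := by
    rcases hβij.eq_or_lt with rfl | hlt
    · rw [hP, if_pos rfl, thresholdResponse_of_min_le le_rfl]
    · have hlt' : min (-log ν / βj) T < -log ν / βi :=
        (min_le_left _ _).trans_lt (div_lt_div_of_pos_left hL hβi hlt)
      rw [hP, if_neg hlt.ne, thresholdResponse_of_lt hlt']
  subst hBRi' hBRj' hP'
  refine ⟨⟨⟨le_min (div_pos hL hβj).le hT.le, min_le_right _ _⟩,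
    thresholdResponse_mem_Icc (div_pos hL hβi).le hT.le,
    (thresholdResponse_mutual_iff hab).2 ⟨rfl, rfl⟩⟩, fun ψi ψj _ _ hi hj => ?_⟩
  obtain ⟨rfl, rfl⟩ := (thresholdResponse_mutual_iff hab).1 ⟨hi, hj⟩
  rfl
end

section
/- Let βⁱ, βʲ > 0 and ν ∈ (0,1), and set t₁ = −(ln ν)/βʲ, so that ν = e^{−βʲ t₁}. Then for every t ∈ [0, t₁]: (βʲ/(βⁱ+βʲ)) e^{−(βⁱ+βʲ)t} ≥ e^{−βⁱ t₁} ( ν − (βⁱ/(βⁱ+βʲ)) e^{−βʲ t₁} ). (Key inequality, with equality at t = t₁, from Case 1 of the proof of the paper's Theorem 2, establishing that the HJB maximizer equals βⁱ on [0,t₁].) -/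
open Real Set

lemma exp_neg_mul_neg_log_div {b ν : ℝ} (hb : b ≠ 0) (hν : 0 < ν) :
    exp (-(b * (-log ν / b))) = ν := by
  rw [mul_div_cancel₀ _ hb, neg_neg, exp_log hν]

lemma exp_neg_mul_mul_sub_div_mul_exp_neg {a b : ℝ} (hab : a + b ≠ 0) (s : ℝ) :
    exp (-(a * s)) * (exp (-(b * s)) - a / (a + b) * exp (-(b * s)))
      = b / (a + b) * exp (-((a + b) * s)) := by
  rw [show -((a + b) * s) = -(a * s) + -(b * s) by ring, exp_add]
  field_simp
  ring

theorem hjb_maximizer_inequality_case1_general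
    (βi βj ν : ℝ) (hβi : 0 < βi) (hβj : 0 < βj) (hν0 : 0 < ν)
    (t₁ : ℝ) (ht₁ : t₁ = -(Real.log ν) / βj) :
    Real.exp (-(βj * t₁)) = ν ∧
    ∀ t ∈ Icc (0:ℝ) t₁,
      βj / (βi + βj) * Real.exp (-((βi + βj) * t))
        ≥ Real.exp (-(βi * t₁))
            * (ν - βi / (βi + βj) * Real.exp (-(βj * t₁))) := by
  have hν : exp (-(βj * t₁)) = ν := ht₁ ▸ exp_neg_mul_neg_log_div hβj.ne' hν0
  refine ⟨hν, fun t ht => ?_⟩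
  have hsum : 0 < βi + βj := add_pos hβi hβj
  -- Since `ν = e^{−βʲ t₁}`, the right-hand side is the left-hand side at `t = t₁`.
  rw [← hν, exp_neg_mul_mul_sub_div_mul_exp_neg hsum.ne']
  exact mul_le_mul_of_nonneg_left
    (exp_le_exp.2 <| neg_le_neg <| mul_le_mul_of_nonneg_left ht.2 hsum.le) (div_pos hβj hsum).le

/-- Key inequality from Case 1 of the proof of the paper's Theorem 2: with
`t₁ = −(ln ν)/βʲ` (so that `ν = e^{−βʲ t₁}`), for every `t ∈ [0, t₁]`,
`(βʲ/(βⁱ+βʲ)) e^{−(βⁱ+βʲ)t} ≥ e^{−βⁱt₁} (ν − (βⁱ/(βⁱ+βʲ)) e^{−βʲt₁})`,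
establishing that the HJB maximizer equals `βⁱ` on `[0,t₁]`. -/
theorem hjb_maximizer_inequality_case1
    (βi βj ν : ℝ) (hβi : 0 < βi) (hβj : 0 < βj) (hν0 : 0 < ν) (hν1 : ν < 1)
    (t₁ : ℝ) (ht₁ : t₁ = -(Real.log ν) / βj) :
    Real.exp (-(βj * t₁)) = ν ∧
    ∀ t ∈ Icc (0:ℝ) t₁,
      βj / (βi + βj) * Real.exp (-((βi + βj) * t))
        ≥ Real.exp (-(βi * t₁))
            * (ν - βi / (βi + βj) * Real.exp (-(βj * t₁))) :=
  hjb_maximizer_inequality_case1_general βi βj ν hβi hβj hν0 t₁ ht₁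
end

section
/- Let βⁱ, βʲ > 0, T > 0, ψ ∈ [0,T] and ν > 0 with ν < e^{−βʲψ}. Then for every t ∈ [0, ψ]: (βʲ/(βⁱ+βʲ)) e^{−(βⁱ+βʲ)t} ≥ ν e^{−βⁱT} + e^{−βʲψ} ( e^{−βⁱψ} − e^{−βⁱT} ) − (βⁱ/(βⁱ+βʲ)) e^{−(βⁱ+βʲ)ψ}. (Key inequality from Case 2 of the proof of the paper's Theorem 2, establishing that the HJB maximizer equals βⁱ on [0,ψ] when t₁ = T.) -/
open Real Set

/-! Since `e^{−βʲψ} e^{−βⁱψ} = e^{−(βⁱ+βʲ)ψ}`, the right-hand side equals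
`(ν − e^{−βʲψ}) e^{−βⁱT} + (βʲ/(βⁱ+βʲ)) e^{−(βⁱ+βʲ)ψ}`. The first term is negative in
Case 2, and the second is at most the left-hand side because `t ↦ e^{−(βⁱ+βʲ)t}` decreases. -/

lemma exp_neg_mul_le_of_le {s t ψ : ℝ} (hs : 0 ≤ s) (htψ : t ≤ ψ) :
    exp (-(s * ψ)) ≤ exp (-(s * t)) :=
  exp_le_exp.2 (neg_le_neg (mul_le_mul_of_nonneg_left htψ hs))

lemma hjb_case2_rhs_eq (βi βj T ψ ν : ℝ) (hs : βi + βj ≠ 0) :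
    ν * exp (-(βi * T)) + exp (-(βj * ψ)) * (exp (-(βi * ψ)) - exp (-(βi * T)))
        - βi / (βi + βj) * exp (-((βi + βj) * ψ))
      = (ν - exp (-(βj * ψ))) * exp (-(βi * T)) + βj / (βi + βj) * exp (-((βi + βj) * ψ)) := by
  have hprod : exp (-(βj * ψ)) * exp (-(βi * ψ)) = exp (-((βi + βj) * ψ)) := by
    rw [← exp_add]; ring_nf
  rw [mul_sub, hprod]
  field_simp
  ring

theorem hjb_maximizer_inequality_case2_general
    (βi βj T ψ ν : ℝ) (hβi : 0 < βi) (hβj : 0 < βj)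
    (hcase : ν < Real.exp (-(βj * ψ))) :
    ∀ t ∈ Icc (0:ℝ) ψ,
      βj / (βi + βj) * Real.exp (-((βi + βj) * t))
        ≥ ν * Real.exp (-(βi * T))
            + Real.exp (-(βj * ψ))
                * (Real.exp (-(βi * ψ)) - Real.exp (-(βi * T)))
            - βi / (βi + βj) * Real.exp (-((βi + βj) * ψ)) := by
  intro t ht
  have hs : 0 < βi + βj := add_pos hβi hβj
  have hneg : (ν - exp (-(βj * ψ))) * exp (-(βi * T)) ≤ 0 :=
    mul_nonpos_of_nonpos_of_nonneg (sub_nonpos.2 hcase.le) (exp_pos _).le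
  have hmono : βj / (βi + βj) * exp (-((βi + βj) * ψ)) ≤ βj / (βi + βj) * exp (-((βi + βj) * t)) :=
    mul_le_mul_of_nonneg_left (exp_neg_mul_le_of_le hs.le ht.2) (div_pos hβj hs).le
  rw [ge_iff_le, hjb_case2_rhs_eq βi βj T ψ ν hs.ne']
  linarith

/-- Key inequality from Case 2 of the proof of the paper's Theorem 2: if
`ν < e^{−βʲψ}`, then for every `t ∈ [0, ψ]`,
`(βʲ/(βⁱ+βʲ)) e^{−(βⁱ+βʲ)t}
  ≥ ν e^{−βⁱT} + e^{−βʲψ}(e^{−βⁱψ} − e^{−βⁱT}) − (βⁱ/(βⁱ+βʲ)) e^{−(βⁱ+βʲ)ψ}`,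
establishing that the HJB maximizer equals `βⁱ` on `[0,ψ]` when `t₁ = T`. -/
theorem hjb_maximizer_inequality_case2
    (βi βj T ψ ν : ℝ) (hβi : 0 < βi) (hβj : 0 < βj) (hT : 0 < T)
    (hψ : ψ ∈ Icc (0:ℝ) T) (hν0 : 0 < ν)
    (hcase : ν < Real.exp (-(βj * ψ))) :
    ∀ t ∈ Icc (0:ℝ) ψ,
      βj / (βi + βj) * Real.exp (-((βi + βj) * t))
        ≥ ν * Real.exp (-(βi * T))
            + Real.exp (-(βj * ψ))
                * (Real.exp (-(βi * ψ)) - Real.exp (-(βi * T)))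
            - βi / (βi + βj) * Real.exp (-((βi + βj) * ψ)) :=
  hjb_maximizer_inequality_case2_general βi βj T ψ ν hβi hβj hcase
end
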